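/- arXiv:2205.14632 — 6 statements merged into one kernel-verified Lean document; each statement's English description precedes it below -/
import Mathlib

section
/- Let (Ω, F, P) be a probability space, let ξ and η be real-valued random variables on it, and let a > 0. Then sup_{z ∈ ℝ} |P(ξ + η ≤ z) − Φ(z)| ≤ sup_{z ∈ ℝ} |P(ξ ≤ z) − Φ(z)| + P(|η| > a) + a/√(2π). -/
/-!
Split `{ξ + η ≤ z}` according to whether `|η| ≤ a`: up to the event `{a < |η|}`, the distribution
function of `ξ + η` at `z` is squeezed between that of `ξ` at `z - a` and at `z + a`. Shifting the
argument of `Φ` by `a` costs at most `a / √(2π)`, because the standard normal density is bounded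
by `1 / √(2π)`.
-/

open MeasureTheory

/-- The cumulative distribution function of the standard normal distribution. -/
noncomputable def stdNormalCDF (z : ℝ) : ℝ :=
  ∫ x in Set.Iic z, Real.exp (-x ^ 2 / 2) / Real.sqrt (2 * Real.pi)

open ProbabilityTheory

lemma gaussianPDFReal_le (μ : ℝ) (v : NNReal) (x : ℝ) :
    gaussianPDFReal μ v x ≤ (√(2 * Real.pi * v))⁻¹ := by
  refine mul_le_of_le_one_right (inv_nonneg.2 (Real.sqrt_nonneg _)) (Real.exp_le_one_iff.2 ?_)
  exact div_nonpos_of_nonpos_of_nonneg (neg_nonpos.2 (sq_nonneg _)) (by positivity)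

lemma stdNormalCDF_eq_setIntegral_gaussianPDFReal (z : ℝ) :
    stdNormalCDF z = ∫ x in Set.Iic z, gaussianPDFReal 0 1 x := by
  simp only [stdNormalCDF, gaussianPDFReal, NNReal.coe_one, mul_one, sub_zero]
  congr 1
  ext x
  ring

lemma stdNormalCDF_eq_cdf_gaussianReal (z : ℝ) : stdNormalCDF z = cdf (gaussianReal 0 1) z := by
  rw [cdf_eq_real, measureReal_def, gaussianReal_apply_eq_integral _ one_ne_zero,
    ENNReal.toReal_ofReal (setIntegral_nonneg measurableSet_Iic fun x _ ↦
      gaussianPDFReal_nonneg 0 1 x), stdNormalCDF_eq_setIntegral_gaussianPDFReal]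

lemma stdNormalCDF_add_le (z : ℝ) {b : ℝ} (hb : 0 ≤ b) :
    stdNormalCDF (z + b) ≤ stdNormalCDF z + b / Real.sqrt (2 * Real.pi) := by
  have hint := integrable_gaussianPDFReal 0 1
  have hdiff : stdNormalCDF (z + b) - stdNormalCDF z = ∫ x in z..z + b, gaussianPDFReal 0 1 x := by
    rw [stdNormalCDF_eq_setIntegral_gaussianPDFReal, stdNormalCDF_eq_setIntegral_gaussianPDFReal,
      intervalIntegral.integral_Iic_sub_Iic hint.integrableOn hint.integrableOn]
  have hbound : ∫ x in z..z + b, gaussianPDFReal 0 1 x ≤ ∫ _ in z..z + b, (√(2 * Real.pi))⁻¹ :=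
    intervalIntegral.integral_mono_on (le_add_of_nonneg_right hb) hint.intervalIntegrable
      intervalIntegrable_const fun x _ ↦ by simpa using gaussianPDFReal_le 0 1 x
  rw [intervalIntegral.integral_const, add_sub_cancel_left, smul_eq_mul] at hbound
  rw [div_eq_mul_inv]
  linarith

section Perturbation

variable {Ω : Type*} [MeasurableSpace Ω] (P : Measure Ω) [IsFiniteMeasure P] (ξ η : Ω → ℝ) (a : ℝ)

lemma measureReal_add_le_le (z : ℝ) :
    P.real {ω | ξ ω + η ω ≤ z} ≤ P.real {ω | ξ ω ≤ z + a} + P.real {ω | a < |η ω|} := by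
  refine (measureReal_mono fun ω (hω : ξ ω + η ω ≤ z) ↦ ?_).trans (measureReal_union_le _ _)
  rcases le_or_gt |η ω| a with h | h
  · exact Or.inl (show ξ ω ≤ z + a by linarith [abs_le.1 h])
  · exact Or.inr h

lemma measureReal_le_sub_le (z : ℝ) :
    P.real {ω | ξ ω ≤ z - a} ≤ P.real {ω | ξ ω + η ω ≤ z} + P.real {ω | a < |η ω|} := by
  refine (measureReal_mono fun ω (hω : ξ ω ≤ z - a) ↦ ?_).trans (measureReal_union_le _ _)
  rcases le_or_gt |η ω| a with h | h
  · exact Or.inl (show ξ ω + η ω ≤ z by linarith [abs_le.1 h])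
  · exact Or.inr h

end Perturbation

theorem iSup_abs_sub_le_of_shift {F G Φ : ℝ → ℝ} {a ε δ : ℝ}
    (hbdd : BddAbove (Set.range fun z ↦ |F z - Φ z|))
    (hG_le : ∀ z, G z ≤ F (z + a) + ε) (hle_G : ∀ z, F (z - a) ≤ G z + ε)
    (hΦ : ∀ z, Φ (z + a) ≤ Φ z + δ) :
    ⨆ z, |G z - Φ z| ≤ (⨆ z, |F z - Φ z|) + ε + δ := by
  refine ciSup_le fun z ↦ abs_le.2 ⟨?_, ?_⟩
  · have hF := abs_le.1 (le_ciSup hbdd (z - a))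
    have hΦ' := hΦ (z - a)
    rw [sub_add_cancel] at hΦ'
    linarith [hle_G z]
  · have hF := abs_le.1 (le_ciSup hbdd (z + a))
    linarith [hG_le z, hΦ z]

theorem berry_esseen_sum_general {Ω : Type*} [MeasurableSpace Ω] (P : Measure Ω)
    [IsProbabilityMeasure P] (ξ η : Ω → ℝ)
    (a : ℝ) (ha : 0 < a) :
    (⨆ z : ℝ, |(P {ω | ξ ω + η ω ≤ z}).toReal - stdNormalCDF z|) ≤
      (⨆ z : ℝ, |(P {ω | ξ ω ≤ z}).toReal - stdNormalCDF z|)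
        + (P {ω | a < |η ω|}).toReal + a / Real.sqrt (2 * Real.pi) := by
  have hbdd : BddAbove (Set.range fun z ↦ |(P {ω | ξ ω ≤ z}).toReal - stdNormalCDF z|) := by
    refine ⟨1, Set.forall_mem_range.2 fun z ↦ ?_⟩
    rw [stdNormalCDF_eq_cdf_gaussianReal]
    exact abs_sub_le_of_nonneg_of_le measureReal_nonneg measureReal_le_one
      (cdf_nonneg _ z) (cdf_le_one _ z)
  exact iSup_abs_sub_le_of_shift hbdd (measureReal_add_le_le P ξ η a)
    (measureReal_le_sub_le P ξ η a) fun z ↦ stdNormalCDF_add_le z ha.le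

/-- Lemma 2.9 (Chang): Berry–Esséen bound for a sum of two random variables. -/
theorem berry_esseen_sum {Ω : Type*} [MeasurableSpace Ω] (P : Measure Ω)
    [IsProbabilityMeasure P] (ξ η : Ω → ℝ) (hξ : Measurable ξ) (hη : Measurable η)
    (a : ℝ) (ha : 0 < a) :
    (⨆ z : ℝ, |(P {ω | ξ ω + η ω ≤ z}).toReal - stdNormalCDF z|) ≤
      (⨆ z : ℝ, |(P {ω | ξ ω ≤ z}).toReal - stdNormalCDF z|)
        + (P {ω | a < |η ω|}).toReal + a / Real.sqrt (2 * Real.pi) :=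
  berry_esseen_sum_general P ξ η a ha
end

section
/- For every T > 0 and every bounded measurable symmetric function φ on [0,T]², one has |∥φ∥²_{H^{⊗2}} − ∥φ∥²_{H₁^{⊗2}}| ≤ ∥φ∥²_{H₂^{⊗2}} + 2 C'_β ∥Kφ∥²_{H₁}. -/
/-!
Off the diagonal write `D = Cβ k + E` with `k(t, s) = |t - s| ^ (2β - 2)` and
`|E(t, s)| ≤ Cβ' p(t, s)`, `p(t, s) = (t s) ^ (β - 1)`. Then
`D ⊗ D - Cβ² k ⊗ k = E ⊗ E + Cβ (k ⊗ E + E ⊗ k)`, so the integrand of the difference is bounded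
pointwise by `|φ ⊗ φ| (Cβ'² p ⊗ p + Cβ Cβ' (k ⊗ p + p ⊗ k))`. Integrating out the variables carried
by `p` turns the `k ⊗ p` term into `⟨Kφ ⊗ Kφ, k⟩`, and the symmetry of `φ` gives the `p ⊗ k` term
the same integral.

All four-fold integrals converge absolutely: `k` and `p` are integrable on `(0, T]²` because
`2β - 2 > -1`, `D` is dominated by them off the (null) diagonal, and `φ` is bounded. So the iterated
integrals can be traded for integrals over the product measure, where the estimate is integrated.
-/

open MeasureTheory Set Function

theorem abs_mul_sub_sq_mul_le {c k₁ k₂ d₁ d₂ e₁ e₂ : ℝ} (hc : 0 ≤ c) (hk₁ : 0 ≤ k₁) (hk₂ : 0 ≤ k₂)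
    (h₁ : |d₁ - c * k₁| ≤ e₁) (h₂ : |d₂ - c * k₂| ≤ e₂) :
    |d₁ * d₂ - c ^ 2 * (k₁ * k₂)| ≤ e₁ * e₂ + c * (k₁ * e₂ + e₁ * k₂) :=
  calc |d₁ * d₂ - c ^ 2 * (k₁ * k₂)|
      = |(d₁ - c * k₁) * (d₂ - c * k₂) + c * k₁ * (d₂ - c * k₂) + (d₁ - c * k₁) * (c * k₂)| := by
        ring_nf
    _ ≤ |d₁ - c * k₁| * |d₂ - c * k₂| + c * k₁ * |d₂ - c * k₂| + |d₁ - c * k₁| * (c * k₂) := by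
        refine (abs_add_three _ _ _).trans_eq ?_
        simp only [abs_mul, abs_of_nonneg hc, abs_of_nonneg hk₁, abs_of_nonneg hk₂]
    _ ≤ e₁ * e₂ + c * k₁ * e₂ + e₁ * (c * k₂) := by
        have he₁ : 0 ≤ e₁ := (abs_nonneg _).trans h₁
        gcongr
    _ = e₁ * e₂ + c * (k₁ * e₂ + e₁ * k₂) := by ring

section FourfoldProduct

variable {α β γ δ : Type*} [MeasurableSpace α] [MeasurableSpace β] [MeasurableSpace γ]
  [MeasurableSpace δ] {μ : Measure α} {ν : Measure β} {ρ : Measure γ} {σ : Measure δ}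
  [SFinite μ] [SFinite ν] [SFinite ρ] [SFinite σ]

theorem measurePreserving_prodProdProdComm :
    MeasurePreserving (Equiv.prodProdProdComm α β γ δ)
      ((μ.prod ν).prod (ρ.prod σ)) ((μ.prod ρ).prod (ν.prod σ)) := by
  have e₁ := measurePreserving_prodAssoc μ ν (ρ.prod σ)
  have e₂ := (MeasurePreserving.id μ).prod (measurePreserving_prodAssoc ν ρ σ).symm
  have e₃ := (MeasurePreserving.id μ).prod
    ((Measure.measurePreserving_swap (μ := ν) (ν := ρ)).prod (MeasurePreserving.id σ))
  have e₄ := (MeasurePreserving.id μ).prod (measurePreserving_prodAssoc ρ ν σ)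
  have e₅ := (measurePreserving_prodAssoc μ ρ (ν.prod σ)).symm
  exact e₅.comp (e₄.comp (e₃.comp (e₂.comp e₁)))

theorem MeasureTheory.Integrable.mul_prod_prodProdProdComm {a : α × γ → ℝ} {b : β × δ → ℝ}
    (ha : Integrable a (μ.prod ρ)) (hb : Integrable b (ν.prod σ)) :
    Integrable (fun p : (α × β) × (γ × δ) => a (p.1.1, p.2.1) * b (p.1.2, p.2.2))
      ((μ.prod ν).prod (ρ.prod σ)) :=
  measurePreserving_prodProdProdComm.integrable_comp_of_integrable (ha.mul_prod hb)

theorem ae_prodProdProdComm {P : α × γ → Prop} {Q : β × δ → Prop}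
    (hP : ∀ᵐ x ∂μ.prod ρ, P x) (hQ : ∀ᵐ y ∂ν.prod σ, Q y) :
    ∀ᵐ p ∂(μ.prod ν).prod (ρ.prod σ), P (p.1.1, p.2.1) ∧ Q (p.1.2, p.2.2) :=
  measurePreserving_prodProdProdComm.quasiMeasurePreserving.ae
    ((Measure.quasiMeasurePreserving_fst.ae hP).and (Measure.quasiMeasurePreserving_snd.ae hQ))

theorem integral_integral_integral_integral {E : Type*} [NormedAddCommGroup E] [NormedSpace ℝ E]
    {F : α → β → γ → δ → E}
    (hF : Integrable (fun p : (α × β) × (γ × δ) => F p.1.1 p.1.2 p.2.1 p.2.2)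
      ((μ.prod ν).prod (ρ.prod σ))) :
    ∫ a, ∫ b, ∫ c, ∫ d, F a b c d ∂σ ∂ρ ∂ν ∂μ
      = ∫ p, F p.1.1 p.1.2 p.2.1 p.2.2 ∂(μ.prod ν).prod (ρ.prod σ) := by
  have hinner : ∀ᵐ w ∂μ.prod ν,
      ∫ v, F w.1 w.2 v.1 v.2 ∂ρ.prod σ = ∫ c, ∫ d, F w.1 w.2 c d ∂σ ∂ρ :=
    hF.prod_right_ae.mono fun w hw => integral_prod _ hw
  rw [integral_prod _ hF, integral_congr_ae hinner,
    integral_prod _ (hF.integral_prod_left.congr hinner)]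

end FourfoldProduct

theorem ae_fst_ne_snd {α : Type*} [MeasurableSpace α] [MeasurableEq α] (μ : Measure α)
    {ν : Measure α} [SFinite ν] [NullSingletonClass ν] :
    ∀ᵐ x ∂μ.prod ν, x.1 ≠ x.2 :=
  (Measure.ae_prod_iff_ae_ae measurableSet_diagonal.compl).2
    (ae_of_all _ fun x => by simp [ae_iff])

section RealIntegrals

variable {α : Type*} [MeasurableSpace α] {μ : Measure α}

theorem integrable_of_abs_sub_le {f g h : α → ℝ} (hf : AEStronglyMeasurable f μ)
    (hg : Integrable g μ) (hh : Integrable h μ) (hfgh : ∀ᵐ x ∂μ, |f x - g x| ≤ h x) :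
    Integrable f μ :=
  (hg.abs.add hh).mono' hf <| hfgh.mono fun x hx => by
    have := abs_sub_abs_le_abs_sub (f x) (g x)
    rw [Real.norm_eq_abs, Pi.add_apply]
    linarith

theorem abs_integral_sub_const_mul_le {f g h : α → ℝ} (c : ℝ) (hf : Integrable f μ)
    (hg : Integrable g μ) (hh : Integrable h μ) (hfgh : ∀ᵐ x ∂μ, |f x - c * g x| ≤ h x) :
    |∫ x, f x ∂μ - c * ∫ x, g x ∂μ| ≤ ∫ x, h x ∂μ := by
  rw [← integral_const_mul, ← integral_sub hf (hg.const_mul c)]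
  exact abs_integral_le_integral_abs.trans (integral_mono_ae (hf.sub (hg.const_mul c)).abs hh hfgh)

theorem integral_integral_integral_integral_eq_integral_integral_kernel (μ : Measure α)
    (ψ a : α → α → ℝ) (w : α → ℝ) :
    ∫ t₁, ∫ s₁, ∫ t₂, ∫ s₂, ψ t₁ s₁ * ψ t₂ s₂ * a t₁ t₂ * (w s₁ * w s₂) ∂μ ∂μ ∂μ ∂μ
      = ∫ r₁, ∫ r₂, (∫ u, ψ r₁ u * w u ∂μ) * (∫ u, ψ r₂ u * w u ∂μ) * a r₁ r₂ ∂μ ∂μ := by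
  have hinner : ∀ t₁ s₁ t₂, ∫ s₂, ψ t₁ s₁ * ψ t₂ s₂ * a t₁ t₂ * (w s₁ * w s₂) ∂μ
      = ψ t₁ s₁ * w s₁ * ((∫ u, ψ t₂ u * w u ∂μ) * a t₁ t₂) := fun t₁ s₁ t₂ => by
    rw [← integral_mul_const, ← integral_const_mul]
    congr 1 with s₂
    ring
  simp only [hinner, integral_const_mul, integral_mul_const]
  simp only [mul_assoc, integral_const_mul]

end RealIntegrals

theorem intervalIntegrable_abs_rpow {r : ℝ} (hr : -1 < r) (a b : ℝ) :
    IntervalIntegrable (fun x : ℝ => |x| ^ r) volume a b := by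
  have hpos : ∀ c, 0 ≤ c → IntervalIntegrable (fun x : ℝ => |x| ^ r) volume 0 c := fun c hc =>
    (intervalIntegral.intervalIntegrable_rpow' hr).congr fun x hx => by
      rw [uIoc_of_le hc] at hx
      simp only [abs_of_pos hx.1]
  have h : ∀ c, IntervalIntegrable (fun x : ℝ => |x| ^ r) volume 0 c := fun c =>
    (le_total 0 c).elim (hpos c) fun hc => by
      simpa using (IntervalIntegrable.iff_comp_neg).mp (hpos (-c) (by linarith))
  exact (h a).symm.trans (h b)

theorem integral_abs_sub_rpow_le {r a b c : ℝ} (hr : -1 < r) (hc : c ∈ Icc a b) :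
    ∫ x in a..b, |c - x| ^ r ≤ ∫ x in (a - b)..(b - a), |x| ^ r := by
  obtain ⟨hac, hcb⟩ := hc
  rw [intervalIntegral.integral_comp_sub_left (fun x => |x| ^ r)]
  exact intervalIntegral.integral_mono_interval (by linarith) (by linarith) (by linarith)
    (ae_of_all _ fun x => by positivity) (intervalIntegrable_abs_rpow hr _ _)

theorem integrable_abs_sub_rpow_prod {r a b : ℝ} (hr : -1 < r) (hab : a ≤ b) :
    Integrable (fun x : ℝ × ℝ => |x.1 - x.2| ^ r)
      ((volume.restrict (Ioc a b)).prod (volume.restrict (Ioc a b))) := by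
  have hmeas : Measurable (fun x : ℝ × ℝ => |x.1 - x.2| ^ r) := by fun_prop
  refine (integrable_prod_iff hmeas.aestronglyMeasurable).2 ⟨ae_of_all _ fun c => ?_, ?_⟩
  · simpa [IntegrableOn] using
      ((intervalIntegrable_abs_rpow hr (c - a) (c - b)).comp_sub_left c).1
  · refine Integrable.of_bound
      hmeas.norm.stronglyMeasurable.integral_prod_right'.aestronglyMeasurable
      (∫ x in (a - b)..(b - a), |x| ^ r) ((ae_restrict_mem measurableSet_Ioc).mono fun c hc => ?_)
    have hnorm : ∀ x : ℝ, ‖|c - x| ^ r‖ = |c - x| ^ r := fun x =>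
      Real.norm_of_nonneg (by positivity)
    rw [Real.norm_of_nonneg (integral_nonneg fun _ => norm_nonneg _)]
    simp only [hnorm, ← intervalIntegral.integral_of_le hab]
    exact integral_abs_sub_rpow_le hr (Ioc_subset_Icc_self hc)

/-- The integrand of `⟨φ ⊗ φ, a ⊗ b⟩` at the point `((t₁, s₁), (t₂, s₂))`. -/
def tensorIntegrand {α : Type*} (φ a b : α → α → ℝ) (p : (α × α) × (α × α)) : ℝ :=
  φ p.1.1 p.1.2 * φ p.2.1 p.2.2 * a p.1.1 p.2.1 * b p.1.2 p.2.2

section TensorIntegrand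

variable {α : Type*} [MeasurableSpace α] {μ : Measure α} [SFinite μ]

theorem integral_integral_integral_integral_eq_integral_tensorIntegrand {φ a b : α → α → ℝ}
    (h : Integrable (tensorIntegrand φ a b) ((μ.prod μ).prod (μ.prod μ))) :
    ∫ t₁, ∫ s₁, ∫ t₂, ∫ s₂, φ t₁ s₁ * φ t₂ s₂ * a t₁ t₂ * b s₁ s₂ ∂μ ∂μ ∂μ ∂μ
      = ∫ p, tensorIntegrand φ a b p ∂(μ.prod μ).prod (μ.prod μ) :=
  integral_integral_integral_integral h

theorem integrable_tensorIntegrand {φ a b : α → α → ℝ} {M : ℝ} (hφ : Measurable (uncurry φ))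
    (hφM : ∀ᵐ x ∂μ.prod μ, |φ x.1 x.2| ≤ M) (ha : Integrable (uncurry a) (μ.prod μ))
    (hb : Integrable (uncurry b) (μ.prod μ)) :
    Integrable (tensorIntegrand φ a b) ((μ.prod μ).prod (μ.prod μ)) := by
  have hbound : ∀ᵐ p ∂(μ.prod μ).prod (μ.prod μ), ‖φ p.1.1 p.1.2 * φ p.2.1 p.2.2‖ ≤ M * M :=
    ((Measure.quasiMeasurePreserving_fst.ae hφM).and
      (Measure.quasiMeasurePreserving_snd.ae hφM)).mono fun p hp => by
        rw [Real.norm_eq_abs, abs_mul]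
        exact mul_le_mul hp.1 hp.2 (abs_nonneg _) ((abs_nonneg _).trans hp.1)
  refine ((ha.mul_prod_prodProdProdComm hb).bdd_mul (by fun_prop) hbound).congr
    (ae_of_all _ fun p => ?_)
  simp only [tensorIntegrand, uncurry_apply_pair]
  ring

theorem integral_tensorIntegrand_comm {φ : α → α → ℝ} (hφ : ∀ t s, φ t s = φ s t)
    (a b : α → α → ℝ) :
    ∫ p, tensorIntegrand φ a b p ∂(μ.prod μ).prod (μ.prod μ)
      = ∫ p, tensorIntegrand φ b a p ∂(μ.prod μ).prod (μ.prod μ) := by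
  rw [← (Measure.measurePreserving_swap.prod Measure.measurePreserving_swap).integral_comp
    (MeasurableEquiv.prodComm.prodCongr MeasurableEquiv.prodComm).measurableEmbedding
    (tensorIntegrand φ b a)]
  congr 1 with p
  simp only [tensorIntegrand, Prod.map_fst, Prod.map_snd, Prod.fst_swap, Prod.snd_swap, hφ p.1.1,
    hφ p.2.1]
  ring

end TensorIntegrand

theorem abs_tensorIntegrand_sub_le {β Cβ Cβ' : ℝ} {D : ℝ → ℝ → ℝ} (hCβ : 0 ≤ Cβ)
    (hDbound : ∀ t s : ℝ, 0 < t → 0 < s → t ≠ s →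
      |D t s - Cβ * |t - s| ^ (2 * β - 2)| ≤ Cβ' * (t * s) ^ (β - 1))
    (φ : ℝ → ℝ → ℝ) {t₁ s₁ t₂ s₂ : ℝ} (ht : 0 < t₁ ∧ 0 < t₂ ∧ t₁ ≠ t₂)
    (hs : 0 < s₁ ∧ 0 < s₂ ∧ s₁ ≠ s₂) :
    |tensorIntegrand φ D D ((t₁, s₁), (t₂, s₂))
      - Cβ ^ 2 * tensorIntegrand φ (fun t s => |t - s| ^ (2 * β - 2))
          (fun t s => |t - s| ^ (2 * β - 2)) ((t₁, s₁), (t₂, s₂))|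
    ≤ Cβ' ^ 2 * tensorIntegrand (fun t s => |φ t s|) (fun t s => (t * s) ^ (β - 1))
          (fun t s => (t * s) ^ (β - 1)) ((t₁, s₁), (t₂, s₂))
      + Cβ * Cβ' * (tensorIntegrand (fun t s => |φ t s|) (fun t s => |t - s| ^ (2 * β - 2))
          (fun t s => t ^ (β - 1) * s ^ (β - 1)) ((t₁, s₁), (t₂, s₂))
        + tensorIntegrand (fun t s => |φ t s|) (fun t s => t ^ (β - 1) * s ^ (β - 1))
          (fun t s => |t - s| ^ (2 * β - 2)) ((t₁, s₁), (t₂, s₂))) := by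
  obtain ⟨ht₁, ht₂, ht⟩ := ht
  obtain ⟨hs₁, hs₂, hs⟩ := hs
  have key := abs_mul_sub_sq_mul_le hCβ (by positivity) (by positivity)
    (hDbound t₁ t₂ ht₁ ht₂ ht) (hDbound s₁ s₂ hs₁ hs₂ hs)
  simp only [tensorIntegrand, Real.mul_rpow ht₁.le ht₂.le, Real.mul_rpow hs₁.le hs₂.le] at key ⊢
  calc _ = |φ t₁ s₁| * |φ t₂ s₂| * |D t₁ t₂ * D s₁ s₂
          - Cβ ^ 2 * (|t₁ - t₂| ^ (2 * β - 2) * |s₁ - s₂| ^ (2 * β - 2))| := by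
        rw [← abs_mul, ← abs_mul]
        ring_nf
    _ ≤ _ := (mul_le_mul_of_nonneg_left key (by positivity)).trans_eq (by ring)

theorem abs_integral_tensor_sub_le {μ : Measure ℝ} [SFinite μ] [NullSingletonClass μ]
    (hμ : ∀ᵐ x ∂μ, 0 < x) {β Cβ Cβ' M : ℝ} (hCβ : 0 ≤ Cβ) {D φ : ℝ → ℝ → ℝ}
    (hD : Measurable (uncurry D))
    (hDbound : ∀ t s : ℝ, 0 < t → 0 < s → t ≠ s →
      |D t s - Cβ * |t - s| ^ (2 * β - 2)| ≤ Cβ' * (t * s) ^ (β - 1))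
    (hφ : Measurable (uncurry φ)) (hφsymm : ∀ t s, φ t s = φ s t)
    (hφM : ∀ᵐ x ∂μ.prod μ, |φ x.1 x.2| ≤ M) (hw : Integrable (fun x => x ^ (β - 1)) μ)
    (hk : Integrable (uncurry fun t s : ℝ => |t - s| ^ (2 * β - 2)) (μ.prod μ)) :
    |(∫ t₁, ∫ s₁, ∫ t₂, ∫ s₂, φ t₁ s₁ * φ t₂ s₂ * D t₁ t₂ * D s₁ s₂ ∂μ ∂μ ∂μ ∂μ)
      - Cβ ^ 2 * ∫ t₁, ∫ s₁, ∫ t₂, ∫ s₂,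
        φ t₁ s₁ * φ t₂ s₂ * |t₁ - t₂| ^ (2 * β - 2) * |s₁ - s₂| ^ (2 * β - 2) ∂μ ∂μ ∂μ ∂μ|
    ≤ Cβ' ^ 2 * (∫ t₁, ∫ s₁, ∫ t₂, ∫ s₂,
        |φ t₁ s₁ * φ t₂ s₂| * (t₁ * t₂) ^ (β - 1) * (s₁ * s₂) ^ (β - 1) ∂μ ∂μ ∂μ ∂μ)
      + 2 * Cβ' * (Cβ * ∫ r₁, ∫ r₂,
          (∫ u, |φ r₁ u| * u ^ (β - 1) ∂μ) * (∫ u, |φ r₂ u| * u ^ (β - 1) ∂μ)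
            * |r₁ - r₂| ^ (2 * β - 2) ∂μ ∂μ) := by
  have hμ₂ : ∀ᵐ x ∂μ.prod μ, 0 < x.1 ∧ 0 < x.2 ∧ x.1 ≠ x.2 :=
    (((Measure.quasiMeasurePreserving_fst.ae hμ).and (Measure.quasiMeasurePreserving_snd.ae hμ)).and
      (ae_fst_ne_snd μ)).mono fun x hx => ⟨hx.1.1, hx.1.2, hx.2⟩
  have hW : Integrable (uncurry fun t s : ℝ => t ^ (β - 1) * s ^ (β - 1)) (μ.prod μ) :=
    hw.mul_prod hw
  have hp : Integrable (uncurry fun t s : ℝ => (t * s) ^ (β - 1)) (μ.prod μ) :=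
    hW.congr (hμ₂.mono fun x hx => (Real.mul_rpow hx.1.le hx.2.1.le).symm)
  have hDi : Integrable (uncurry D) (μ.prod μ) :=
    integrable_of_abs_sub_le hD.aestronglyMeasurable (hk.const_mul Cβ) (hp.const_mul Cβ')
      (hμ₂.mono fun x hx => hDbound x.1 x.2 hx.1 hx.2.1 hx.2.2)
  have hφ' : Measurable (uncurry fun t s => |φ t s|) := hφ.abs
  have hφM' : ∀ᵐ x ∂μ.prod μ, |(fun t s => |φ t s|) x.1 x.2| ≤ M := by simpa using hφM
  have iD := integrable_tensorIntegrand hφ hφM hDi hDi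
  have ik := integrable_tensorIntegrand hφ hφM hk hk
  have ip := integrable_tensorIntegrand hφ' hφM' hp hp
  have ikW := integrable_tensorIntegrand hφ' hφM' hk hW
  have iWk := integrable_tensorIntegrand hφ' hφM' hW hk
  simp only [abs_mul]
  rw [integral_integral_integral_integral_eq_integral_tensorIntegrand iD,
    integral_integral_integral_integral_eq_integral_tensorIntegrand ik,
    integral_integral_integral_integral_eq_integral_tensorIntegrand ip,
    ← integral_integral_integral_integral_eq_integral_integral_kernel,
    integral_integral_integral_integral_eq_integral_tensorIntegrand ikW]
  refine (abs_integral_sub_const_mul_le _ iD ik ((ip.const_mul _).add ((ikW.add iWk).const_mul _))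
    ((ae_prodProdProdComm hμ₂ hμ₂).mono fun q hq =>
      abs_tensorIntegrand_sub_le hCβ hDbound φ hq.1 hq.2)).trans_eq ?_
  rw [integral_add' (ip.const_mul _) ((ikW.add iWk).const_mul _), integral_const_mul,
    integral_const_mul, integral_add' ikW iWk,
    integral_tensorIntegrand_comm (fun t s => by rw [hφsymm t s])
      (fun t s => |t - s| ^ (2 * β - 2))]
  ring

theorem norm_H_tensor2_sub_norm_H1_tensor2_le_general
    (β : ℝ) (hβ : β ∈ Set.Ioo (1/2 : ℝ) 1)
    (Cβ Cβ' : ℝ) (hCβ : 0 < Cβ)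
    (D : ℝ → ℝ → ℝ) (hD : Measurable (Function.uncurry D))
    (hDbound : ∀ t s : ℝ, 0 < t → 0 < s → t ≠ s →
      |D t s - Cβ * |t - s| ^ (2 * β - 2)| ≤ Cβ' * (t * s) ^ (β - 1))
    (T : ℝ) (hT : 0 < T)
    (φ : ℝ → ℝ → ℝ) (hφ : Measurable (Function.uncurry φ))
    (hφsymm : ∀ t s : ℝ, φ t s = φ s t)
    (M : ℝ) (hφM : ∀ t ∈ Set.Icc (0 : ℝ) T, ∀ s ∈ Set.Icc (0 : ℝ) T, |φ t s| ≤ M) :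
    |(∫ t₁ in (0:ℝ)..T, ∫ s₁ in (0:ℝ)..T, ∫ t₂ in (0:ℝ)..T, ∫ s₂ in (0:ℝ)..T,
        φ t₁ s₁ * φ t₂ s₂ * D t₁ t₂ * D s₁ s₂)
      - Cβ ^ 2 * ∫ t₁ in (0:ℝ)..T, ∫ s₁ in (0:ℝ)..T, ∫ t₂ in (0:ℝ)..T, ∫ s₂ in (0:ℝ)..T,
        φ t₁ s₁ * φ t₂ s₂ * |t₁ - t₂| ^ (2 * β - 2) * |s₁ - s₂| ^ (2 * β - 2)|
    ≤ Cβ' ^ 2 * (∫ t₁ in (0:ℝ)..T, ∫ s₁ in (0:ℝ)..T, ∫ t₂ in (0:ℝ)..T, ∫ s₂ in (0:ℝ)..T,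
        |φ t₁ s₁ * φ t₂ s₂| * (t₁ * t₂) ^ (β - 1) * (s₁ * s₂) ^ (β - 1))
      + 2 * Cβ' * (Cβ * ∫ r₁ in (0:ℝ)..T, ∫ r₂ in (0:ℝ)..T,
          (∫ u in (0:ℝ)..T, |φ r₁ u| * u ^ (β - 1)) * (∫ u in (0:ℝ)..T, |φ r₂ u| * u ^ (β - 1))
            * |r₁ - r₂| ^ (2 * β - 2)) := by
  have hμ : ∀ᵐ x ∂volume.restrict (Ioc 0 T), x ∈ Ioc 0 T := ae_restrict_mem measurableSet_Ioc
  have hφM' : ∀ᵐ x ∂(volume.restrict (Ioc 0 T)).prod (volume.restrict (Ioc 0 T)),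
      |φ x.1 x.2| ≤ M :=
    ((Measure.quasiMeasurePreserving_fst.ae hμ).and (Measure.quasiMeasurePreserving_snd.ae hμ)).mono
      fun x hx => hφM _ (Ioc_subset_Icc_self hx.1) _ (Ioc_subset_Icc_self hx.2)
  have hw : IntegrableOn (fun x => x ^ (β - 1)) (Ioc 0 T) :=
    (intervalIntegrable_iff_integrableOn_Ioc_of_le hT.le).mp
      (intervalIntegral.intervalIntegrable_rpow' (by linarith [hβ.1]))
  simp only [intervalIntegral.integral_of_le hT.le]
  exact abs_integral_tensor_sub_le (hμ.mono fun x hx => hx.1) hCβ.le hD hDbound hφ hφsymm hφM' hw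
    (integrable_abs_sub_rpow_prod (by linarith [hβ.1]) hT.le)

/-- Proposition 2.3, second inequality:
`|‖φ‖²_{H^{⊗2}} − ‖φ‖²_{H₁^{⊗2}}| ≤ ‖φ‖²_{H₂^{⊗2}} + 2 C'_β ‖Kφ‖²_{H₁}`. -/
theorem norm_H_tensor2_sub_norm_H1_tensor2_le
    (β : ℝ) (hβ : β ∈ Set.Ioo (1/2 : ℝ) 1)
    (Cβ Cβ' : ℝ) (hCβ : 0 < Cβ) (hCβ' : 0 ≤ Cβ')
    (D : ℝ → ℝ → ℝ) (hD : Measurable (Function.uncurry D))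
    (hDbound : ∀ t s : ℝ, 0 < t → 0 < s → t ≠ s →
      |D t s - Cβ * |t - s| ^ (2 * β - 2)| ≤ Cβ' * (t * s) ^ (β - 1))
    (T : ℝ) (hT : 0 < T)
    (φ : ℝ → ℝ → ℝ) (hφ : Measurable (Function.uncurry φ))
    (hφsymm : ∀ t s : ℝ, φ t s = φ s t)
    (M : ℝ) (hφM : ∀ t ∈ Set.Icc (0 : ℝ) T, ∀ s ∈ Set.Icc (0 : ℝ) T, |φ t s| ≤ M) :
    |(∫ t₁ in (0:ℝ)..T, ∫ s₁ in (0:ℝ)..T, ∫ t₂ in (0:ℝ)..T, ∫ s₂ in (0:ℝ)..T,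
        φ t₁ s₁ * φ t₂ s₂ * D t₁ t₂ * D s₁ s₂)
      - Cβ ^ 2 * ∫ t₁ in (0:ℝ)..T, ∫ s₁ in (0:ℝ)..T, ∫ t₂ in (0:ℝ)..T, ∫ s₂ in (0:ℝ)..T,
        φ t₁ s₁ * φ t₂ s₂ * |t₁ - t₂| ^ (2 * β - 2) * |s₁ - s₂| ^ (2 * β - 2)|
    ≤ Cβ' ^ 2 * (∫ t₁ in (0:ℝ)..T, ∫ s₁ in (0:ℝ)..T, ∫ t₂ in (0:ℝ)..T, ∫ s₂ in (0:ℝ)..T,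
        |φ t₁ s₁ * φ t₂ s₂| * (t₁ * t₂) ^ (β - 1) * (s₁ * s₂) ^ (β - 1))
      + 2 * Cβ' * (Cβ * ∫ r₁ in (0:ℝ)..T, ∫ r₂ in (0:ℝ)..T,
          (∫ u in (0:ℝ)..T, |φ r₁ u| * u ^ (β - 1)) * (∫ u in (0:ℝ)..T, |φ r₂ u| * u ^ (β - 1))
            * |r₁ - r₂| ^ (2 * β - 2)) :=
  norm_H_tensor2_sub_norm_H1_tensor2_le_general β hβ Cβ Cβ' hCβ D hD hDbound T hT φ hφ hφsymm M hφM
end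

section
/- Let k > 0. There exists a constant C, depending only on k, β, C_β, C'_β and not on T, such that for every T > 0, |∫₀^T ∫₀^T e^{−k(u+v)} D(u,v) du dv| ≤ C. Equivalently, with m_T(u) := e^{−ku} 1_{[0,T]}(u), the quantity ∥m_T∥²_H — which equals the second moment E[M_T²] of the Wiener integral M_T = ∫₀^T e^{−ks} dG_s — is bounded uniformly in T. -/
/-! Off the diagonal the hypothesis on `D` gives
`e^{-k(u+v)} |D(u,v)| ≤ C_β e^{-ku} e^{-kv} |u-v|^{2β-2} + C'_β e^{-ku} u^{β-1} e^{-kv} v^{β-1}`.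
The second term factors, and `∫₀^∞ e^{-kx} x^{β-1} dx < ∞`. For the first, the integral in
`v` is bounded uniformly in `u`: by `∫_{-1}^{1} |w|^{2β-2} dw < ∞` where `|u - v| ≤ 1`
(here `2β-2 > -1`) and by `∫₀^∞ e^{-kv} dv` elsewhere (here `2β-2 ≤ 0`). So
`e^{-k(u+v)} D(u,v)` is absolutely integrable over `(0,∞)²`, and that absolute integral
bounds every truncation to `[0,T]²`. -/

open MeasureTheory Set Real ENNReal

theorem integrableOn_abs_rpow_Icc {p : ℝ} (hp : -1 < p) :
    IntegrableOn (fun w : ℝ => |w| ^ p) (Icc (-1) 1) := by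
  have h01 : IntervalIntegrable (fun w : ℝ => |w| ^ p) volume 0 1 := by
    refine (intervalIntegral.intervalIntegrable_rpow' hp).congr fun w hw => ?_
    rw [uIoc_of_le zero_le_one] at hw
    simp only [abs_of_pos hw.1]
  have hneg : IntervalIntegrable (fun w : ℝ => |w| ^ p) volume (-1) 0 := by
    simpa using (h01.comp_sub_left 0).symm
  exact (intervalIntegrable_iff_integrableOn_Icc_of_le (by norm_num)).1 (hneg.trans h01)

theorem ofReal_exp_neg_mul_mul_abs_sub_rpow_le {k p u v : ℝ} (hk : 0 ≤ k) (hp : p ≤ 0)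
    (hv : 0 ≤ v) :
    ENNReal.ofReal (exp (-k * v) * |u - v| ^ p) ≤
      (Icc (-1) 1).indicator (fun w => ENNReal.ofReal (|w| ^ p)) (u - v) +
        ENNReal.ofReal (exp (-k * v)) := by
  have hexp : exp (-k * v) ≤ 1 :=
    exp_le_one_iff.2 (mul_nonpos_of_nonpos_of_nonneg (neg_nonpos.2 hk) hv)
  by_cases hnear : u - v ∈ Icc (-1) 1
  · rw [indicator_of_mem hnear]
    exact (ENNReal.ofReal_le_ofReal
      (mul_le_of_le_one_left (by positivity) hexp)).trans le_self_add
  · rw [indicator_of_notMem hnear, zero_add]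
    have hfar : 1 ≤ |u - v| := by
      rw [mem_Icc, not_and_or, not_le, not_le] at hnear
      rcases hnear with h | h
      · rw [abs_of_neg (by linarith)]; linarith
      · rw [abs_of_pos (by linarith)]; linarith
    exact ENNReal.ofReal_le_ofReal
      (mul_le_of_le_one_right (exp_pos _).le (rpow_le_one_of_one_le_of_nonpos hfar hp))

theorem setLIntegral_Ioi_exp_neg_mul_mul_abs_sub_rpow_le {k p : ℝ} (hk : 0 ≤ k) (hp : p ≤ 0)
    (u : ℝ) :
    ∫⁻ v in Ioi 0, ENNReal.ofReal (exp (-k * v) * |u - v| ^ p) ≤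
      (∫⁻ w in Icc (-1) 1, ENNReal.ofReal (|w| ^ p)) +
        ∫⁻ v in Ioi 0, ENNReal.ofReal (exp (-k * v)) := by
  set near := (Icc (-1 : ℝ) 1).indicator fun w => ENNReal.ofReal (|w| ^ p)
  have hnear : Measurable near :=
    (by fun_prop : Measurable fun w : ℝ => ENNReal.ofReal (|w| ^ p)).indicator measurableSet_Icc
  calc ∫⁻ v in Ioi 0, ENNReal.ofReal (exp (-k * v) * |u - v| ^ p)
      ≤ ∫⁻ v in Ioi 0, (near (u - v) + ENNReal.ofReal (exp (-k * v))) :=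
        setLIntegral_mono' measurableSet_Ioi fun v hv =>
          ofReal_exp_neg_mul_mul_abs_sub_rpow_le hk hp hv.le
    _ = (∫⁻ v in Ioi 0, near (u - v)) + ∫⁻ v in Ioi 0, ENNReal.ofReal (exp (-k * v)) :=
        lintegral_add_left (hnear.comp (measurable_const.sub measurable_id)) _
    _ ≤ (∫⁻ v, near (u - v)) + ∫⁻ v in Ioi 0, ENNReal.ofReal (exp (-k * v)) := by
        gcongr; exact Measure.restrict_le_self
    _ = _ := by rw [lintegral_sub_left_eq_self near u, lintegral_indicator measurableSet_Icc]

theorem enorm_exp_neg_mul_add_mul_le {k p q c c' u v d : ℝ} (hc : 0 ≤ c) (hu : 0 < u)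
    (hv : 0 < v) (hd : |d - c * |u - v| ^ p| ≤ c' * (u * v) ^ q) :
    ‖exp (-k * (u + v)) * d‖ₑ ≤
      ENNReal.ofReal c * ENNReal.ofReal (exp (-k * u)) *
          ENNReal.ofReal (exp (-k * v) * |u - v| ^ p) +
        ENNReal.ofReal c' * ENNReal.ofReal (exp (-k * u) * u ^ q) *
          ENNReal.ofReal (exp (-k * v) * v ^ q) := by
  have habs : |d| ≤ c * |u - v| ^ p + c' * (u * v) ^ q := by
    have := abs_sub_abs_le_abs_sub d (c * |u - v| ^ p)
    rw [abs_of_nonneg (mul_nonneg hc (by positivity))] at this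
    linarith
  have hreal : |exp (-k * (u + v)) * d| ≤
      c * exp (-k * u) * (exp (-k * v) * |u - v| ^ p) +
        c' * (exp (-k * u) * u ^ q) * (exp (-k * v) * v ^ q) := by
    rw [abs_mul, abs_of_pos (exp_pos _)]
    calc exp (-k * (u + v)) * |d|
        ≤ exp (-k * (u + v)) * (c * |u - v| ^ p + c' * (u * v) ^ q) := by gcongr
      _ = _ := by rw [mul_add, mul_rpow hu.le hv.le, mul_add, exp_add]; ring
  rw [Real.enorm_eq_ofReal_abs]
  refine (ENNReal.ofReal_le_ofReal hreal).trans (ENNReal.ofReal_add_le.trans_eq ?_)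
  rw [ENNReal.ofReal_mul (mul_nonneg hc (exp_pos _).le), ENNReal.ofReal_mul hc,
    ENNReal.ofReal_mul' (by positivity : 0 ≤ exp (-k * v) * v ^ q),
    ENNReal.ofReal_mul' (by positivity : 0 ≤ exp (-k * u) * u ^ q)]

theorem setLIntegral_Ioi_enorm_exp_neg_mul_add_mul_le {k p q c c' u : ℝ} {D : ℝ → ℝ → ℝ}
    (hk : 0 ≤ k) (hp : p ≤ 0) (hc : 0 ≤ c) (hu : 0 < u)
    (hD : ∀ v, 0 < v → u ≠ v → |D u v - c * |u - v| ^ p| ≤ c' * (u * v) ^ q) :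
    ∫⁻ v in Ioi 0, ‖exp (-k * (u + v)) * D u v‖ₑ ≤
      ENNReal.ofReal c * ENNReal.ofReal (exp (-k * u)) *
          ((∫⁻ w in Icc (-1) 1, ENNReal.ofReal (|w| ^ p)) +
            ∫⁻ v in Ioi 0, ENNReal.ofReal (exp (-k * v))) +
        ENNReal.ofReal c' * ENNReal.ofReal (exp (-k * u) * u ^ q) *
          ∫⁻ v in Ioi 0, ENNReal.ofReal (exp (-k * v) * v ^ q) := by
  have hne : ∀ᵐ v : ℝ, v ∉ ({u} : Set ℝ) := (countable_singleton u).ae_notMem volume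
  calc ∫⁻ v in Ioi 0, ‖exp (-k * (u + v)) * D u v‖ₑ
      ≤ ∫⁻ v in Ioi 0, (ENNReal.ofReal c * ENNReal.ofReal (exp (-k * u)) *
            ENNReal.ofReal (exp (-k * v) * |u - v| ^ p) +
          ENNReal.ofReal c' * ENNReal.ofReal (exp (-k * u) * u ^ q) *
            ENNReal.ofReal (exp (-k * v) * v ^ q)) :=
        setLIntegral_mono_ae' measurableSet_Ioi <| hne.mono fun v hvu hv =>
          enorm_exp_neg_mul_add_mul_le hc hu hv (hD v hv (Ne.symm hvu))
    _ = ENNReal.ofReal c * ENNReal.ofReal (exp (-k * u)) *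
            (∫⁻ v in Ioi 0, ENNReal.ofReal (exp (-k * v) * |u - v| ^ p)) +
          ENNReal.ofReal c' * ENNReal.ofReal (exp (-k * u) * u ^ q) *
            ∫⁻ v in Ioi 0, ENNReal.ofReal (exp (-k * v) * v ^ q) := by
        rw [lintegral_add_left (by fun_prop), lintegral_const_mul _ (by fun_prop),
          lintegral_const_mul _ (by fun_prop)]
    _ ≤ _ := by gcongr; exact setLIntegral_Ioi_exp_neg_mul_mul_abs_sub_rpow_le hk hp u

theorem lintegral_Ioi_lintegral_Ioi_enorm_exp_neg_mul_add_mul_lt_top {k p q c c' : ℝ}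
    {D : ℝ → ℝ → ℝ} (hk : 0 < k) (hp : p ∈ Ioc (-1) 0) (hq : -1 < q) (hc : 0 ≤ c)
    (hD : ∀ u v, 0 < u → 0 < v → u ≠ v → |D u v - c * |u - v| ^ p| ≤ c' * (u * v) ^ q) :
    ∫⁻ u in Ioi 0, ∫⁻ v in Ioi 0, ‖exp (-k * (u + v)) * D u v‖ₑ < ⊤ := by
  set A := (∫⁻ w in Icc (-1) 1, ENNReal.ofReal (|w| ^ p)) +
    ∫⁻ v in Ioi 0, ENNReal.ofReal (exp (-k * v))
  set E := ∫⁻ v in Ioi 0, ENNReal.ofReal (exp (-k * v))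
  set B := ∫⁻ v in Ioi 0, ENNReal.ofReal (exp (-k * v) * v ^ q)
  have hE : E < ⊤ := (exp_neg_integrableOn_Ioi 0 hk).lintegral_lt_top
  have hA : A < ⊤ :=
    ENNReal.add_lt_top.2 ⟨(integrableOn_abs_rpow_Icc hp.1).lintegral_lt_top, hE⟩
  have hB : B < ⊤ := by
    refine (IntegrableOn.congr_fun (integrableOn_rpow_mul_exp_neg_mul_rpow hq zero_lt_one hk)
      (fun x _ => ?_) measurableSet_Ioi).lintegral_lt_top
    rw [Real.rpow_one, mul_comm]
  calc ∫⁻ u in Ioi 0, ∫⁻ v in Ioi 0, ‖exp (-k * (u + v)) * D u v‖ₑ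
      ≤ ∫⁻ u in Ioi 0, (ENNReal.ofReal c * A * ENNReal.ofReal (exp (-k * u)) +
          ENNReal.ofReal c' * B * ENNReal.ofReal (exp (-k * u) * u ^ q)) :=
        setLIntegral_mono' measurableSet_Ioi fun u hu =>
          (setLIntegral_Ioi_enorm_exp_neg_mul_add_mul_le hk.le hp.2 hc hu (hD u · hu)).trans_eq
            (by ring)
    _ = ENNReal.ofReal c * A * E + ENNReal.ofReal c' * B * B := by
        rw [lintegral_add_left (by fun_prop), lintegral_const_mul _ (by fun_prop),
          lintegral_const_mul _ (by fun_prop)]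
    _ < ⊤ := ENNReal.add_lt_top.2
        ⟨ENNReal.mul_lt_top (ENNReal.mul_lt_top ofReal_lt_top hA) hE,
          ENNReal.mul_lt_top (ENNReal.mul_lt_top ofReal_lt_top hB) hB⟩

theorem enorm_integral_integral_le {α β E : Type*} [MeasurableSpace α] [MeasurableSpace β]
    [NormedAddCommGroup E] [NormedSpace ℝ E] (μ : Measure α) (ν : Measure β)
    (f : α → β → E) :
    ‖∫ x, ∫ y, f x y ∂ν ∂μ‖ₑ ≤ ∫⁻ x, ∫⁻ y, ‖f x y‖ₑ ∂ν ∂μ :=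
  (enorm_integral_le_lintegral_enorm _).trans
    (lintegral_mono fun _ => enorm_integral_le_lintegral_enorm _)

theorem second_moment_MT_uniformly_bounded_general
    (β : ℝ) (hβ : β ∈ Set.Ioo (1/2 : ℝ) 1)
    (Cβ Cβ' : ℝ) (hCβ : 0 < Cβ)
    (D : ℝ → ℝ → ℝ)
    (hDbound : ∀ t s : ℝ, 0 < t → 0 < s → t ≠ s →
      |D t s - Cβ * |t - s| ^ (2 * β - 2)| ≤ Cβ' * (t * s) ^ (β - 1))
    (k : ℝ) (hk : 0 < k) :
    ∃ C : ℝ, ∀ T : ℝ, 0 < T →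
      |∫ u in (0:ℝ)..T, ∫ v in (0:ℝ)..T, Real.exp (-k * (u + v)) * D u v| ≤ C := by
  obtain ⟨hβ₁, hβ₂⟩ := hβ
  have hfin := lintegral_Ioi_lintegral_Ioi_enorm_exp_neg_mul_add_mul_lt_top hk
    ⟨by linarith, by linarith⟩ (by linarith : -1 < β - 1) hCβ.le hDbound
  refine ⟨(∫⁻ u in Ioi 0, ∫⁻ v in Ioi 0, ‖exp (-k * (u + v)) * D u v‖ₑ).toReal,
    fun T hT => ?_⟩
  simp only [intervalIntegral.integral_of_le hT.le]
  rw [← ENNReal.toReal_ofReal (abs_nonneg _), ← Real.enorm_eq_ofReal_abs]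
  refine ENNReal.toReal_mono hfin.ne ((enorm_integral_integral_le _ _ _).trans ?_)
  exact (lintegral_mono_set Ioc_subset_Ioi_self).trans
    (lintegral_mono fun u => lintegral_mono_set Ioc_subset_Ioi_self)

/-- Lemma 3.4: the second moment `E[M_T²] = ‖m_T‖²_H` of the Wiener integral
`M_T = ∫₀^T e^{−ks} dG_s` is bounded uniformly in `T`. -/
theorem second_moment_MT_uniformly_bounded
    (β : ℝ) (hβ : β ∈ Set.Ioo (1/2 : ℝ) 1)
    (Cβ Cβ' : ℝ) (hCβ : 0 < Cβ) (hCβ' : 0 ≤ Cβ')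
    (D : ℝ → ℝ → ℝ) (hD : Measurable (Function.uncurry D))
    (hDbound : ∀ t s : ℝ, 0 < t → 0 < s → t ≠ s →
      |D t s - Cβ * |t - s| ^ (2 * β - 2)| ≤ Cβ' * (t * s) ^ (β - 1))
    (k : ℝ) (hk : 0 < k) :
    ∃ C : ℝ, ∀ T : ℝ, 0 < T →
      |∫ u in (0:ℝ)..T, ∫ v in (0:ℝ)..T, Real.exp (-k * (u + v)) * D u v| ≤ C :=
  second_moment_MT_uniformly_bounded_general β hβ Cβ Cβ' hCβ D hDbound k hk
end

section
/- Let k > 0. There exists a constant C, depending only on k, β, C_β, C'_β and not on T, such that for every T > 0, |∫₀^T ∫₀^T e^{−k(T−u)} e^{−k(T−v)} D(u,v) du dv| ≤ C. Equivalently, with k_T(s) := e^{−k(T−s)} 1_{[0,T]}(s), the quantity ∥k_T∥²_H — which equals the variance E[Z_T²] of the Wiener integral Z_T = ∫₀^T e^{−k(T−s)} dG_s — is bounded uniformly in T. -/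
/-!
Pointwise, `|D u v| ≤ Cβ |u - v|^(2β-2) + Cβ' u^(β-1) v^(β-1)`. For `u, v ≤ T` one has
`(T - u) + (T - v) ≥ ((T - u) + |u - v|) / 2`, so half of the exponential decay of
`e^{-k(T-u)} e^{-k(T-v)}` can be traded for decay in `|u - v|`: the first term contributes at most
`Cβ (2 / k) ∫_ℝ |x|^(2β-2) e^{-k|x|/2} dx`, which is finite because `2β - 2 > -1`. The second term
factorises, and `∫₀^T e^{-k(T-v)} v^(β-1) dv ≤ 1/k + 1/β`. Neither bound depends on `T`.
-/

open MeasureTheory Set Real intervalIntegral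

theorem integrable_comp_abs_of_integrableOn_Ioi {E : Type*} [NormedAddCommGroup E] {f : ℝ → E}
    (hf : IntegrableOn f (Ioi 0)) : Integrable (fun x => f |x|) := by
  have hind := (integrable_indicator_iff measurableSet_Ioi).2 hf
  refine (hind.add hind.comp_neg).congr ?_
  filter_upwards [Measure.ae_ne volume 0] with x hx
  rcases hx.lt_or_gt with hx | hx
  · simp [hx, hx.not_gt, abs_of_neg hx]
  · simp [hx, hx.not_gt, abs_of_pos hx]

theorem integrable_abs_rpow_mul_exp_neg_mul_abs {γ c : ℝ} (hγ : -1 < γ) (hc : 0 < c) :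
    Integrable (fun x => |x| ^ γ * exp (-c * |x|)) := by
  refine integrable_comp_abs_of_integrableOn_Ioi (f := fun x => x ^ γ * exp (-c * x)) ?_
  simpa only [rpow_one] using integrableOn_rpow_mul_exp_neg_mul_rpow hγ one_pos hc

theorem intervalIntegral_le_integral_of_nonneg {f : ℝ → ℝ} {a b : ℝ} (hab : a ≤ b)
    (hf : Integrable f) (hf0 : 0 ≤ f) : ∫ x in a..b, f x ≤ ∫ x, f x := by
  rw [integral_of_le hab]
  exact setIntegral_le_integral hf (Filter.Eventually.of_forall hf0)

theorem integral_exp_neg_mul_sub_le {c a T : ℝ} (hc : 0 < c) :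
    ∫ u in a..T, exp (-c * (T - u)) ≤ 1 / c := by
  have hderiv : ∀ u, HasDerivAt (fun u => exp (-c * (T - u)) / c) (exp (-c * (T - u))) u :=
    fun u => ((((hasDerivAt_id u).const_sub T).const_mul (-c)).exp.div_const c).congr_deriv
      (by simp only [id]; field_simp)
  rw [integral_eq_sub_of_hasDerivAt (fun u _ => hderiv u)
    ((by fun_prop : Continuous fun u => exp (-c * (T - u))).intervalIntegrable _ _)]
  simp only [sub_self, mul_zero, exp_zero]
  linarith [div_pos (exp_pos (-c * (T - a))) hc]

theorem intervalIntegrable_exp_mul_rpow {k T r a b : ℝ} (hr : -1 < r) :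
    IntervalIntegrable (fun v => exp (-k * (T - v)) * v ^ r) volume a b :=
  (intervalIntegrable_rpow' hr).continuousOn_mul (by fun_prop)

/-- Split at `min 1 T`: near `0` the exponential is at most `1`, beyond `1` the power is. -/
theorem integral_exp_mul_rpow_sub_one_le {k T β : ℝ} (hk : 0 < k) (hβ : 0 < β) (hβ1 : β ≤ 1)
    (hT : 0 ≤ T) :
    ∫ v in 0..T, exp (-k * (T - v)) * v ^ (β - 1) ≤ 1 / k + 1 / β := by
  have hr : -1 < β - 1 := by linarith
  set m := min 1 T
  have hm0 : 0 ≤ m := le_min zero_le_one hT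
  have hmT : m ≤ T := min_le_right 1 T
  rw [← integral_add_adjacent_intervals (intervalIntegrable_exp_mul_rpow hr)
    (intervalIntegrable_exp_mul_rpow hr), add_comm]
  gcongr ?_ + ?_
  · calc ∫ v in m..T, exp (-k * (T - v)) * v ^ (β - 1) ≤ ∫ v in m..T, exp (-k * (T - v)) := by
          refine integral_mono_on_of_le_Ioo hmT (intervalIntegrable_exp_mul_rpow hr)
            ((by fun_prop : Continuous fun v => exp (-k * (T - v))).intervalIntegrable _ _)
            fun v hv => ?_
          have hv1 : 1 ≤ v := by
            rcases min_lt_iff.1 hv.1 with h | h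
            · exact h.le
            · exact absurd hv.2 (not_lt.2 h.le)
          exact mul_le_of_le_one_right (exp_pos _).le
            (rpow_le_one_of_one_le_of_nonpos hv1 (by linarith))
      _ ≤ 1 / k := integral_exp_neg_mul_sub_le hk
  · calc ∫ v in 0..m, exp (-k * (T - v)) * v ^ (β - 1) ≤ ∫ v in 0..m, v ^ (β - 1) := by
          refine integral_mono_on hm0 (intervalIntegrable_exp_mul_rpow hr)
            (intervalIntegrable_rpow' hr) fun v hv => ?_
          exact mul_le_of_le_one_left (rpow_nonneg hv.1 _)
            (exp_le_one_iff.2 (by nlinarith [hv.2.trans hmT]))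
      _ = m ^ β / β := by
          rw [integral_rpow (Or.inl hr), sub_add_cancel, zero_rpow hβ.ne', sub_zero]
      _ ≤ 1 / β := by
          gcongr
          exact rpow_le_one hm0 (min_le_left 1 T) hβ.le

theorem exp_mul_exp_le_of_le {k T u v : ℝ} (hk : 0 ≤ k) (hu : u ≤ T) (hv : v ≤ T) :
    exp (-k * (T - u)) * exp (-k * (T - v)) ≤
      exp (-(k / 2) * (T - u)) * exp (-(k / 2) * |u - v|) := by
  have h : |u - v| ≤ (T - u) + 2 * (T - v) := abs_le.2 ⟨by linarith, by linarith⟩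
  rw [← exp_add, ← exp_add, exp_le_exp]
  nlinarith [mul_le_mul_of_nonneg_left h hk]

theorem abs_integral_le_of_abs_le_mul_add_mul {F f g : ℝ → ℝ} {s t a b A B : ℝ} (hst : s ≤ t)
    (hf : IntervalIntegrable f volume s t) (hg : IntervalIntegrable g volume s t)
    (ha : 0 ≤ a) (hb : 0 ≤ b) (hF : ∀ᵐ x, x ∈ Ioc s t → |F x| ≤ a * f x + b * g x)
    (hA : ∫ x in s..t, f x ≤ A) (hB : ∫ x in s..t, g x ≤ B) :
    |∫ x in s..t, F x| ≤ a * A + b * B :=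
  calc |∫ x in s..t, F x| ≤ ∫ x in s..t, (a * f x + b * g x) :=
        norm_integral_le_of_norm_le (f := F) hst hF ((hf.const_mul a).add (hg.const_mul b))
    _ = (a * ∫ x in s..t, f x) + b * ∫ x in s..t, g x := by
        rw [integral_add (hf.const_mul a) (hg.const_mul b), intervalIntegral.integral_const_mul,
          intervalIntegral.integral_const_mul]
    _ ≤ a * A + b * B := by gcongr

section KernelBound

variable {β Cβ Cβ' k T : ℝ} {D : ℝ → ℝ → ℝ}

theorem abs_exp_mul_exp_mul_le (hCβ : 0 ≤ Cβ)
    (hDbound : ∀ t s : ℝ, 0 < t → 0 < s → t ≠ s →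
      |D t s - Cβ * |t - s| ^ (2 * β - 2)| ≤ Cβ' * (t * s) ^ (β - 1))
    (hk : 0 ≤ k) {u v : ℝ} (hu : u ∈ Ioc 0 T) (hv : v ∈ Ioc 0 T) (huv : u ≠ v) :
    |exp (-k * (T - u)) * exp (-k * (T - v)) * D u v| ≤
      Cβ * exp (-(k / 2) * (T - u)) * (|u - v| ^ (2 * β - 2) * exp (-(k / 2) * |u - v|)) +
      Cβ' * (exp (-k * (T - u)) * u ^ (β - 1)) * (exp (-k * (T - v)) * v ^ (β - 1)) := by
  have hpow : 0 ≤ Cβ * |u - v| ^ (2 * β - 2) := by positivity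
  have hD : |D u v| ≤ Cβ * |u - v| ^ (2 * β - 2) + Cβ' * (u ^ (β - 1) * v ^ (β - 1)) := by
    have h := hDbound u v hu.1 hv.1 huv
    rw [mul_rpow hu.1.le hv.1.le] at h
    linarith [abs_sub_abs_le_abs_sub (D u v) (Cβ * |u - v| ^ (2 * β - 2)), abs_of_nonneg hpow]
  have hexp := exp_mul_exp_le_of_le hk hu.2 hv.2
  rw [abs_mul, abs_of_pos (by positivity)]
  calc exp (-k * (T - u)) * exp (-k * (T - v)) * |D u v|
      ≤ exp (-k * (T - u)) * exp (-k * (T - v)) *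
          (Cβ * |u - v| ^ (2 * β - 2) + Cβ' * (u ^ (β - 1) * v ^ (β - 1))) := by gcongr
    _ = Cβ * |u - v| ^ (2 * β - 2) * (exp (-k * (T - u)) * exp (-k * (T - v))) +
          Cβ' * (exp (-k * (T - u)) * u ^ (β - 1)) * (exp (-k * (T - v)) * v ^ (β - 1)) := by
        ring
    _ ≤ Cβ * |u - v| ^ (2 * β - 2) *
          (exp (-(k / 2) * (T - u)) * exp (-(k / 2) * |u - v|)) +
          Cβ' * (exp (-k * (T - u)) * u ^ (β - 1)) * (exp (-k * (T - v)) * v ^ (β - 1)) := by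
        gcongr
    _ = _ := by ring

theorem abs_integral_exp_mul_exp_mul_le (hβ : 1 / 2 < β) (hβ1 : β ≤ 1) (hCβ : 0 ≤ Cβ)
    (hCβ' : 0 ≤ Cβ')
    (hDbound : ∀ t s : ℝ, 0 < t → 0 < s → t ≠ s →
      |D t s - Cβ * |t - s| ^ (2 * β - 2)| ≤ Cβ' * (t * s) ^ (β - 1))
    (hk : 0 < k) {u : ℝ} (hu : u ∈ Ioc 0 T) :
    |∫ v in 0..T, exp (-k * (T - u)) * exp (-k * (T - v)) * D u v| ≤
      Cβ * (∫ x, |x| ^ (2 * β - 2) * exp (-(k / 2) * |x|)) * exp (-(k / 2) * (T - u)) +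
      Cβ' * (1 / k + 1 / β) * (exp (-k * (T - u)) * u ^ (β - 1)) := by
  set g : ℝ → ℝ := fun x => |x| ^ (2 * β - 2) * exp (-(k / 2) * |x|)
  have hg : Integrable g :=
    integrable_abs_rpow_mul_exp_neg_mul_abs (by linarith) (by positivity)
  have hT : 0 ≤ T := hu.1.le.trans hu.2
  have hA : ∫ v in 0..T, g (u - v) ≤ ∫ x, g x :=
    (intervalIntegral_le_integral_of_nonneg hT (hg.comp_sub_left u) fun v => by positivity).trans_eq
      (integral_sub_left_eq_self g volume u)
  have hF : ∀ᵐ v, v ∈ Ioc 0 T → |exp (-k * (T - u)) * exp (-k * (T - v)) * D u v| ≤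
      Cβ * exp (-(k / 2) * (T - u)) * g (u - v) +
      Cβ' * (exp (-k * (T - u)) * u ^ (β - 1)) * (exp (-k * (T - v)) * v ^ (β - 1)) := by
    filter_upwards [Measure.ae_ne volume u] with v hvu hv
    exact abs_exp_mul_exp_mul_le hCβ hDbound hk.le hu hv hvu.symm
  refine (abs_integral_le_of_abs_le_mul_add_mul hT (hg.comp_sub_left u).intervalIntegrable
    (intervalIntegrable_exp_mul_rpow (by linarith)) (mul_nonneg hCβ (exp_pos _).le)
    (mul_nonneg hCβ' (mul_nonneg (exp_pos _).le (rpow_nonneg hu.1.le _))) hF hA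
    (integral_exp_mul_rpow_sub_one_le hk (by linarith) hβ1 hT)).trans_eq ?_
  ring

end KernelBound

theorem variance_ZT_uniformly_bounded_general
    (β : ℝ) (hβ : β ∈ Set.Ioo (1/2 : ℝ) 1)
    (Cβ Cβ' : ℝ) (hCβ : 0 < Cβ) (hCβ' : 0 ≤ Cβ')
    (D : ℝ → ℝ → ℝ)
    (hDbound : ∀ t s : ℝ, 0 < t → 0 < s → t ≠ s →
      |D t s - Cβ * |t - s| ^ (2 * β - 2)| ≤ Cβ' * (t * s) ^ (β - 1))
    (k : ℝ) (hk : 0 < k) :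
    ∃ C : ℝ, ∀ T : ℝ, 0 < T →
      |∫ u in (0:ℝ)..T, ∫ v in (0:ℝ)..T,
        Real.exp (-k * (T - u)) * Real.exp (-k * (T - v)) * D u v| ≤ C := by
  obtain ⟨hβ, hβ1⟩ := hβ
  set J := ∫ x, |x| ^ (2 * β - 2) * exp (-(k / 2) * |x|)
  have hJ : 0 ≤ J := integral_nonneg fun x => by positivity
  refine ⟨Cβ * J * (1 / (k / 2)) + Cβ' * (1 / k + 1 / β) * (1 / k + 1 / β), fun T hT => ?_⟩
  exact abs_integral_le_of_abs_le_mul_add_mul hT.le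
    ((by fun_prop : Continuous fun u => exp (-(k / 2) * (T - u))).intervalIntegrable _ _)
    (intervalIntegrable_exp_mul_rpow (by linarith)) (by positivity)
    (mul_nonneg hCβ' (by positivity))
    (Filter.Eventually.of_forall fun u hu =>
      abs_integral_exp_mul_exp_mul_le hβ hβ1.le hCβ.le hCβ' hDbound hk hu)
    (integral_exp_neg_mul_sub_le (by positivity))
    (integral_exp_mul_rpow_sub_one_le hk (by linarith) hβ1.le hT.le)

/-- The variance `E[Z_T²] = ‖k_T‖²_H` of the Wiener integral
`Z_T = ∫₀^T e^{−k(T−s)} dG_s` is bounded uniformly in `T`. -/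
theorem variance_ZT_uniformly_bounded
    (β : ℝ) (hβ : β ∈ Set.Ioo (1/2 : ℝ) 1)
    (Cβ Cβ' : ℝ) (hCβ : 0 < Cβ) (hCβ' : 0 ≤ Cβ')
    (D : ℝ → ℝ → ℝ) (hD : Measurable (Function.uncurry D))
    (hDbound : ∀ t s : ℝ, 0 < t → 0 < s → t ≠ s →
      |D t s - Cβ * |t - s| ^ (2 * β - 2)| ≤ Cβ' * (t * s) ^ (β - 1))
    (k : ℝ) (hk : 0 < k) :
    ∃ C : ℝ, ∀ T : ℝ, 0 < T →
      |∫ u in (0:ℝ)..T, ∫ v in (0:ℝ)..T,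
        Real.exp (-k * (T - u)) * Real.exp (-k * (T - v)) * D u v| ≤ C :=
  variance_ZT_uniformly_bounded_general β hβ Cβ Cβ' hCβ hCβ' D hDbound k hk
end

section
/- Let k > 0 and μ ∈ ℝ. Set a_T := 1 − e^{−kT}, d_T := T + (e^{−kT} − 1)/k, l_T(s) := (1/k)(1 − e^{−k(T−s)}), n_T(s) := (1/(2k))(e^{−k(2T−s)} − 1), and h_{1,T}(s) := (2μ/T)(l_T(s) + n_T(s)) − (2 d_T / T²) l_T(s) for s ∈ [0,T]. There exists a constant C, depending only on k, μ, β, C_β, C'_β, such that for all T ≥ 1, |∥h_{1,T}∥²_H| ≤ C T^{2β−2}. -/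
/-!
For `T ≥ 1` the kernel `h_{1,T}` is bounded on `[0, T]` by `M / T`, with `M` depending only on
`k` and `μ`. The hypothesis on `D` gives `|D(t,s)| ≤ C_β |t - s|^{2β-2} + C'_β t^{β-1} s^{β-1}`
off the diagonal, and both terms are integrable on `[0,T]²` because `2β - 2 > -1`: they contribute
`2 C_β T^{2β} / (2β - 1)` and `C'_β T^{2β} / β²`. Multiplying by `(M / T)²` gives `T^{2β-2}`.
-/

open MeasureTheory Set intervalIntegral

section RpowKernel

variable {p c T : ℝ}

lemma intervalIntegrable_abs_sub_rpow_and_integral_eq (hp : -1 < p) (hc : 0 ≤ c)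
    (hcT : c ≤ T) :
    IntervalIntegrable (fun x => |c - x| ^ p) volume 0 T ∧
      ∫ x in (0:ℝ)..T, |c - x| ^ p = (c ^ (p + 1) + (T - c) ^ (p + 1)) / (p + 1) := by
  have e₁ : EqOn (fun x => |c - x| ^ p) (fun x => (c - x) ^ p) (uIcc 0 c) := by
    intro x hx
    rw [uIcc_of_le hc] at hx
    simp only [abs_of_nonneg (sub_nonneg.2 hx.2)]
  have e₂ : EqOn (fun x => |c - x| ^ p) (fun x => (x - c) ^ p) (uIcc c T) := by
    intro x hx
    rw [uIcc_of_le hcT] at hx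
    simp only [abs_sub_comm c x, abs_of_nonneg (sub_nonneg.2 hx.1)]
  have i₁ : IntervalIntegrable (fun x => |c - x| ^ p) volume 0 c := by
    refine (intervalIntegrable_congr (e₁.mono uIoc_subset_uIcc)).2 ?_
    simpa using (intervalIntegrable_rpow' hp (a := c) (b := 0)).comp_sub_left c
  have i₂ : IntervalIntegrable (fun x => |c - x| ^ p) volume c T := by
    refine (intervalIntegrable_congr (e₂.mono uIoc_subset_uIcc)).2 ?_
    simpa using (intervalIntegrable_rpow' hp (a := 0) (b := T - c)).comp_sub_right c
  have v₁ : ∫ x in (0:ℝ)..c, |c - x| ^ p = c ^ (p + 1) / (p + 1) := by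
    rw [integral_congr e₁, integral_comp_sub_left (fun x => x ^ p) c, sub_self, sub_zero,
      integral_rpow (Or.inl hp), Real.zero_rpow (by linarith), sub_zero]
  have v₂ : ∫ x in c..T, |c - x| ^ p = (T - c) ^ (p + 1) / (p + 1) := by
    rw [integral_congr e₂, integral_comp_sub_right (fun x => x ^ p) c, sub_self,
      integral_rpow (Or.inl hp), Real.zero_rpow (by linarith), sub_zero]
  refine ⟨i₁.trans i₂, ?_⟩
  rw [← integral_add_adjacent_intervals i₁ i₂, v₁, v₂, add_div]

lemma integral_abs_sub_rpow_le_s9 (hp : -1 < p) (hc : 0 ≤ c) (hcT : c ≤ T) :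
    ∫ x in (0:ℝ)..T, |c - x| ^ p ≤ 2 * T ^ (p + 1) / (p + 1) := by
  rw [(intervalIntegrable_abs_sub_rpow_and_integral_eq hp hc hcT).2]
  have h₁ : c ^ (p + 1) ≤ T ^ (p + 1) := Real.rpow_le_rpow hc hcT (by linarith)
  have h₂ : (T - c) ^ (p + 1) ≤ T ^ (p + 1) :=
    Real.rpow_le_rpow (by linarith) (by linarith) (by linarith)
  exact div_le_div_of_nonneg_right (by linarith) (by linarith)

lemma integral_rpow_from_zero (hp : -1 < p) :
    ∫ x in (0:ℝ)..T, x ^ p = T ^ (p + 1) / (p + 1) := by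
  rw [integral_rpow (Or.inl hp), Real.zero_rpow (by linarith), sub_zero]

end RpowKernel

section KernelBound

variable {p q C C' m T : ℝ} {D : ℝ → ℝ → ℝ} {h : ℝ → ℝ}

lemma abs_le_of_abs_sub_rpow_le (hC : 0 ≤ C)
    (hD : ∀ t s : ℝ, 0 < t → 0 < s → t ≠ s →
      |D t s - C * |t - s| ^ p| ≤ C' * (t * s) ^ q)
    {t s : ℝ} (ht : 0 < t) (hs : 0 < s) (hts : t ≠ s) :
    |D t s| ≤ C * |t - s| ^ p + C' * t ^ q * s ^ q := by
  have hdiff := hD t s ht hs hts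
  rw [Real.mul_rpow ht.le hs.le, ← mul_assoc] at hdiff
  have hnonneg : 0 ≤ C * |t - s| ^ p := by positivity
  linarith [abs_sub_abs_le_abs_sub (D t s) (C * |t - s| ^ p), abs_of_nonneg hnonneg]

lemma abs_integral_mul_kernel_le (hp : -1 < p) (hq : -1 < q) (hC : 0 ≤ C)
    (hD : ∀ t s : ℝ, 0 < t → 0 < s → t ≠ s →
      |D t s - C * |t - s| ^ p| ≤ C' * (t * s) ^ q)
    (hT : 0 ≤ T) (hh : ∀ s ∈ Icc 0 T, |h s| ≤ m) {r₁ : ℝ} (hr₁ : r₁ ∈ Ioc 0 T) :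
    |∫ r₂ in (0:ℝ)..T, h r₁ * h r₂ * D r₁ r₂| ≤
      m ^ 2 * (C * (2 * T ^ (p + 1) / (p + 1)) + C' * r₁ ^ q * (T ^ (q + 1) / (q + 1))) := by
  obtain ⟨hr₁0, hr₁T⟩ := hr₁
  have hm : 0 ≤ m := (abs_nonneg _).trans (hh 0 ⟨le_rfl, hT⟩)
  have hkernel := intervalIntegrable_abs_sub_rpow_and_integral_eq hp hr₁0.le hr₁T
  have hbound : ∀ᵐ r₂, r₂ ∈ Ioc 0 T →
      ‖h r₁ * h r₂ * D r₁ r₂‖ ≤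
        m ^ 2 * (C * |r₁ - r₂| ^ p + C' * r₁ ^ q * r₂ ^ q) := by
    filter_upwards [Measure.ae_ne volume r₁] with r₂ hr₂r₁ hr₂
    have hD' := abs_le_of_abs_sub_rpow_le hC hD hr₁0 hr₂.1 hr₂r₁.symm
    rw [Real.norm_eq_abs, abs_mul, abs_mul, sq]
    gcongr
    · exact hh r₁ ⟨hr₁0.le, hr₁T⟩
    · exact hh r₂ ⟨hr₂.1.le, hr₂.2⟩
  have hint : IntervalIntegrable (fun r₂ => C * |r₁ - r₂| ^ p + C' * r₁ ^ q * r₂ ^ q)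
      volume 0 T :=
    (hkernel.1.const_mul C).add ((intervalIntegrable_rpow' hq).const_mul _)
  refine (norm_integral_le_of_norm_le hT hbound (hint.const_mul _)).trans ?_
  rw [intervalIntegral.integral_const_mul, integral_add (hkernel.1.const_mul C)
    ((intervalIntegrable_rpow' hq).const_mul _), intervalIntegral.integral_const_mul,
    intervalIntegral.integral_const_mul,
    integral_rpow_from_zero hq]
  gcongr
  exact integral_abs_sub_rpow_le_s9 hp hr₁0.le hr₁T

theorem abs_integral_integral_mul_kernel_le (hp : -1 < p) (hq : -1 < q) (hC : 0 ≤ C)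
    (hD : ∀ t s : ℝ, 0 < t → 0 < s → t ≠ s →
      |D t s - C * |t - s| ^ p| ≤ C' * (t * s) ^ q)
    (hT : 0 ≤ T) (hh : ∀ s ∈ Icc 0 T, |h s| ≤ m) :
    |∫ r₁ in (0:ℝ)..T, ∫ r₂ in (0:ℝ)..T, h r₁ * h r₂ * D r₁ r₂| ≤
      m ^ 2 * (C * (2 * T ^ (p + 1) / (p + 1)) * T + C' * (T ^ (q + 1) / (q + 1)) ^ 2) := by
  have hbound : ∀ᵐ r₁, r₁ ∈ Ioc 0 T →
      ‖∫ r₂ in (0:ℝ)..T, h r₁ * h r₂ * D r₁ r₂‖ ≤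
      m ^ 2 * (C * (2 * T ^ (p + 1) / (p + 1)) + C' * r₁ ^ q * (T ^ (q + 1) / (q + 1))) :=
    ae_of_all _ fun r₁ hr₁ => abs_integral_mul_kernel_le hp hq hC hD hT hh hr₁
  have hint : IntervalIntegrable
      (fun r₁ => C * (2 * T ^ (p + 1) / (p + 1)) + C' * r₁ ^ q * (T ^ (q + 1) / (q + 1)))
      volume 0 T :=
    intervalIntegrable_const.add (((intervalIntegrable_rpow' hq).const_mul _).mul_const _)
  refine (norm_integral_le_of_norm_le hT hbound (hint.const_mul _)).trans (le_of_eq ?_)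
  rw [intervalIntegral.integral_const_mul, integral_add intervalIntegrable_const
    (((intervalIntegrable_rpow' hq).const_mul _).mul_const _), intervalIntegral.integral_const,
    intervalIntegral.integral_mul_const, intervalIntegral.integral_const_mul,
    integral_rpow_from_zero hq]
  simp only [sub_zero, smul_eq_mul]
  ring

end KernelBound

lemma abs_one_sub_exp_neg_le_one {x : ℝ} (hx : 0 ≤ x) : |1 - Real.exp (-x)| ≤ 1 := by
  have h₀ := Real.exp_pos (-x)
  have h₁ : Real.exp (-x) ≤ 1 := Real.exp_le_one_iff.2 (neg_nonpos.2 hx)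
  rw [abs_le]
  constructor <;> linarith

namespace OULeastSquares

variable {k T s : ℝ}

noncomputable def lT (k T s : ℝ) : ℝ := (1/k) * (1 - Real.exp (-k * (T - s)))

noncomputable def nT (k T s : ℝ) : ℝ := (1/(2*k)) * (Real.exp (-k * (2*T - s)) - 1)

noncomputable def dT (k T : ℝ) : ℝ := T + (Real.exp (-k * T) - 1) / k

noncomputable def h1T (k μ T s : ℝ) : ℝ :=
  (2*μ/T) * (lT k T s + nT k T s) - (2 * dT k T / T^2) * lT k T s

lemma abs_lT_le (hk : 0 < k) (hs : s ≤ T) : |lT k T s| ≤ 1 / k := by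
  have h := abs_one_sub_exp_neg_le_one (mul_nonneg hk.le (sub_nonneg.2 hs))
  rw [lT, abs_mul, abs_of_pos (one_div_pos.2 hk), neg_mul]
  exact mul_le_of_le_one_right (one_div_pos.2 hk).le h

lemma abs_nT_le (hk : 0 < k) (hs : s ≤ 2 * T) : |nT k T s| ≤ 1 / (2 * k) := by
  have h := abs_one_sub_exp_neg_le_one (mul_nonneg hk.le (sub_nonneg.2 hs))
  have hk₂ : 0 < 1 / (2 * k) := by positivity
  rw [nT, abs_mul, abs_of_pos hk₂, abs_sub_comm, neg_mul]
  exact mul_le_of_le_one_right hk₂.le h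

lemma abs_dT_le (hk : 0 < k) (hT : 0 ≤ T) : |dT k T| ≤ T + 1 / k := by
  have h := abs_one_sub_exp_neg_le_one (mul_nonneg hk.le hT)
  rw [abs_sub_comm, ← neg_mul] at h
  calc |dT k T| ≤ |T| + |(Real.exp (-k * T) - 1) / k| := abs_add_le _ _
    _ = T + |Real.exp (-k * T) - 1| / k := by rw [abs_of_nonneg hT, abs_div, abs_of_pos hk]
    _ ≤ T + 1 / k := by gcongr

lemma abs_h1T_le (μ : ℝ) (hk : 0 < k) (hT : 1 ≤ T) (hs : s ≤ T) :
    |h1T k μ T s| ≤ (3 * |μ| / k + 2 / k + 2 / k ^ 2) / T := by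
  have hT₀ : 0 < T := by linarith
  have hl := abs_lT_le hk hs
  have hn := abs_nT_le hk (show s ≤ 2 * T by linarith)
  have hd := abs_dT_le hk hT₀.le
  calc |h1T k μ T s|
      ≤ (2 * |μ| / T) * (|lT k T s| + |nT k T s|) + (2 * |dT k T| / T ^ 2) * |lT k T s| := by
        rw [h1T]
        refine (abs_sub _ _).trans ?_
        simp only [abs_mul, abs_div, abs_two, abs_of_pos hT₀, abs_of_pos (pow_pos hT₀ 2)]
        gcongr
        exact abs_add_le _ _
    _ ≤ (2 * |μ| / T) * (1 / k + 1 / (2 * k)) + (2 * (T + 1 / k) / T ^ 2) * (1 / k) := by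
        gcongr
    _ = (3 * |μ| / k + 2 / k + 2 / (k ^ 2 * T)) / T := by
        field_simp
        ring
    _ ≤ (3 * |μ| / k + 2 / k + 2 / k ^ 2) / T := by
        gcongr
        exact le_mul_of_one_le_right (by positivity) hT

end OULeastSquares

open OULeastSquares in
theorem h1T_norm_H_bound_general
    (β : ℝ) (hβ : β ∈ Set.Ioo (1/2 : ℝ) 1)
    (Cβ Cβ' : ℝ) (hCβ : 0 < Cβ)
    (D : ℝ → ℝ → ℝ)
    (hDbound : ∀ t s : ℝ, 0 < t → 0 < s → t ≠ s →
      |D t s - Cβ * |t - s| ^ (2 * β - 2)| ≤ Cβ' * (t * s) ^ (β - 1))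
    (k : ℝ) (hk : 0 < k) (μ : ℝ) :
    ∃ C : ℝ, ∀ T : ℝ, 1 ≤ T →
      |∫ r₁ in (0:ℝ)..T, ∫ r₂ in (0:ℝ)..T,
        (let lT := fun s : ℝ => (1/k) * (1 - Real.exp (-k * (T - s)));
         let nT := fun s : ℝ => (1/(2*k)) * (Real.exp (-k * (2*T - s)) - 1);
         let dT := T + (Real.exp (-k * T) - 1) / k;
         let h1T := fun s : ℝ => (2*μ/T) * (lT s + nT s) - (2 * dT / T^2) * lT s;
         h1T r₁ * h1T r₂ * D r₁ r₂)| ≤ C * T ^ (2 * β - 2) := by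
  refine ⟨(3 * |μ| / k + 2 / k + 2 / k ^ 2) ^ 2 * (2 * Cβ / (2 * β - 1) + Cβ' / β ^ 2),
    fun T hT => ?_⟩
  have hT₀ : 0 < T := by linarith
  change |∫ r₁ in (0:ℝ)..T, ∫ r₂ in (0:ℝ)..T, h1T k μ T r₁ * h1T k μ T r₂ * D r₁ r₂|
    ≤ _
  refine (abs_integral_integral_mul_kernel_le (by linarith [hβ.1]) (by linarith [hβ.1])
    hCβ.le hDbound hT₀.le fun s hs => abs_h1T_le μ hk hT hs.2).trans (le_of_eq ?_)
  have hβsq : (T ^ β) ^ 2 = T ^ (2 * β) := by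
    rw [← Real.rpow_mul_natCast hT₀.le]; ring_nf
  have h2β : T ^ (2 * β) = T ^ (2 * β - 2) * T ^ 2 := by
    rw [← Real.rpow_natCast, ← Real.rpow_add hT₀]; norm_num
  have hβ₀ : β ≠ 0 := by linarith [hβ.1]
  have hβ₁ : 2 * β - 1 ≠ 0 := by linarith [hβ.1]
  rw [show 2 * β - 2 + 1 = 2 * β - 1 by ring, sub_add_cancel, Real.rpow_sub_one hT₀.ne',
    div_pow, div_pow, hβsq, h2β]
  field_simp

/-- `|‖h_{1,T}‖²_H| ≤ C T^{2β−2}` for `T ≥ 1`, where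
`h_{1,T}(s) = (2μ/T)(l_T(s) + n_T(s)) − (2 d_T / T²) l_T(s)`. -/
theorem h1T_norm_H_bound
    (β : ℝ) (hβ : β ∈ Set.Ioo (1/2 : ℝ) 1)
    (Cβ Cβ' : ℝ) (hCβ : 0 < Cβ) (hCβ' : 0 ≤ Cβ')
    (D : ℝ → ℝ → ℝ) (hD : Measurable (Function.uncurry D))
    (hDbound : ∀ t s : ℝ, 0 < t → 0 < s → t ≠ s →
      |D t s - Cβ * |t - s| ^ (2 * β - 2)| ≤ Cβ' * (t * s) ^ (β - 1))
    (k : ℝ) (hk : 0 < k) (μ : ℝ) :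
    ∃ C : ℝ, ∀ T : ℝ, 1 ≤ T →
      |∫ r₁ in (0:ℝ)..T, ∫ r₂ in (0:ℝ)..T,
        (let lT := fun s : ℝ => (1/k) * (1 - Real.exp (-k * (T - s)));
         let nT := fun s : ℝ => (1/(2*k)) * (Real.exp (-k * (2*T - s)) - 1);
         let dT := T + (Real.exp (-k * T) - 1) / k;
         let h1T := fun s : ℝ => (2*μ/T) * (lT s + nT s) - (2 * dT / T^2) * lT s;
         h1T r₁ * h1T r₂ * D r₁ r₂)| ≤ C * T ^ (2 * β - 2) :=
  h1T_norm_H_bound_general β hβ Cβ Cβ' hCβ D hDbound k hk μ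
end

section
/- Let β ∈ (1/2, 3/4), k > 0, and σ_β² := (4β−1)(1 + Γ(3−4β)Γ(4β−1)/(Γ(2β)Γ(2−2β))). For T > 0 and z ∈ ℝ with 1 + z σ_β/(2β√(kT)) > 0, set ν_T(z) := √(kT/σ_β²) ((1 + z σ_β/(2β√(kT)))^{−2β} − 1). Then there exist constants C > 0 and T₀ > 0 such that for all T ≥ T₀, sup over all z ∈ ℝ with 1 + z σ_β/(2β√(kT)) > 0 of |(1 − Φ(ν_T(z))) − Φ(z)| ≤ C/√T. -/
open MeasureTheory

/-!
Put `a = σβ / (2β√(kT))`, `b = 2β` and `w = z a`. Then `ν = -f(w) / a` with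
`f(w) = (1 - (1 + w) ^ (-b)) / b`, so by symmetry of the Gaussian `1 - Φ(ν) = Φ(f(w) / a)`, and
the claim becomes `0 ≤ Φ(w / a) - Φ(f(w) / a) ≤ C a`. Bernoulli's inequality gives `f(w) ≤ w`, and
convexity of `t ↦ (1 + w) ^ t` gives `w - f(w) ≤ 12 w²` for `w ≥ -1/2`. Since `x² φ(x) ≤ 1`, the
increment of `Φ` over an interval `[x, y]` not containing `0` is at most `(y - x) / min(x², y²)`,
which is `O(a)` for moderate `w`; for large `|w|` Chebyshev's bound `Φ(-x) ≤ 1 / x²` gives `O(a²)`.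
-/

open ProbabilityTheory Set

lemma gaussianPDFReal_zero_one (x : ℝ) :
    gaussianPDFReal 0 1 x = Real.exp (-x ^ 2 / 2) / Real.sqrt (2 * Real.pi) := by
  simp [gaussianPDFReal_def, div_eq_inv_mul]

lemma measureReal_gaussianReal_zero_one (s : Set ℝ) :
    (gaussianReal 0 1).real s = ∫ x in s, gaussianPDFReal 0 1 x := by
  rw [measureReal_def, gaussianReal_apply_eq_integral _ one_ne_zero,
    ENNReal.toReal_ofReal (integral_nonneg fun x => gaussianPDFReal_nonneg 0 1 x)]

lemma stdNormalCDF_eq_measureReal (z : ℝ) : stdNormalCDF z = (gaussianReal 0 1).real (Iic z) := by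
  simp only [measureReal_gaussianReal_zero_one, gaussianPDFReal_zero_one, stdNormalCDF]

lemma stdNormalCDF_nonneg (z : ℝ) : 0 ≤ stdNormalCDF z := by
  rw [stdNormalCDF_eq_measureReal]; exact measureReal_nonneg

lemma stdNormalCDF_le_one (z : ℝ) : stdNormalCDF z ≤ 1 := by
  rw [stdNormalCDF_eq_measureReal]; exact measureReal_le_one

lemma stdNormalCDF_mono : Monotone stdNormalCDF := fun x y hxy => by
  simp only [stdNormalCDF_eq_measureReal]
  exact measureReal_mono (Iic_subset_Iic.2 hxy)

lemma one_sub_stdNormalCDF (z : ℝ) : 1 - stdNormalCDF z = stdNormalCDF (-z) := by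
  rw [stdNormalCDF_eq_measureReal, stdNormalCDF_eq_measureReal,
    ← probReal_compl_eq_one_sub measurableSet_Iic, compl_Iic, measureReal_gaussianReal_zero_one,
    measureReal_gaussianReal_zero_one, ← integral_comp_neg_Ioi]
  simp [gaussianPDFReal_zero_one]

lemma sq_mul_gaussianPDFReal_le_one (x : ℝ) : x ^ 2 * gaussianPDFReal 0 1 x ≤ 1 := by
  have hexp : x ^ 2 / 2 ≤ Real.exp (x ^ 2 / 2) := by linarith [Real.add_one_le_exp (x ^ 2 / 2)]
  have hpi : 2 ≤ Real.sqrt (2 * Real.pi) := by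
    rw [Real.le_sqrt (by norm_num) (by positivity)]; nlinarith [Real.pi_gt_three]
  rw [gaussianPDFReal_zero_one, neg_div, Real.exp_neg, mul_div_assoc', div_le_one (by positivity),
    ← div_eq_mul_inv, div_le_iff₀ (Real.exp_pos _)]
  nlinarith [Real.exp_pos (x ^ 2 / 2)]

lemma stdNormalCDF_sub_le_of_pos {x y : ℝ} (hx : 0 < x) (hxy : x ≤ y) :
    stdNormalCDF y - stdNormalCDF x ≤ (y - x) / x ^ 2 := by
  have hdensity : ∀ t ∈ Ioc x y, gaussianPDFReal 0 1 t ≤ 1 / x ^ 2 := fun t ht => by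
    rw [le_div_iff₀ (by positivity)]
    calc gaussianPDFReal 0 1 t * x ^ 2 ≤ t ^ 2 * gaussianPDFReal 0 1 t := by
          rw [mul_comm]
          gcongr
          · exact gaussianPDFReal_nonneg 0 1 t
          · exact ht.1.le
      _ ≤ 1 := sq_mul_gaussianPDFReal_le_one t
  rw [stdNormalCDF_eq_measureReal, stdNormalCDF_eq_measureReal, ← Iic_union_Ioc_eq_Iic hxy,
    measureReal_union (Iic_disjoint_Ioc le_rfl) measurableSet_Ioc, add_sub_cancel_left,
    measureReal_gaussianReal_zero_one]
  calc ∫ t in Ioc x y, gaussianPDFReal 0 1 t ≤ ∫ _ in Ioc x y, 1 / x ^ 2 :=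
        setIntegral_mono_on (integrable_gaussianPDFReal 0 1).integrableOn
          (integrableOn_const measure_Ioc_lt_top.ne) measurableSet_Ioc hdensity
    _ = (y - x) / x ^ 2 := by
        rw [setIntegral_const, Real.volume_real_Ioc_of_le hxy, smul_eq_mul]; ring

lemma stdNormalCDF_sub_le_of_neg {x y : ℝ} (hxy : x ≤ y) (hy : y < 0) :
    stdNormalCDF y - stdNormalCDF x ≤ (y - x) / y ^ 2 := by
  have h := stdNormalCDF_sub_le_of_pos (neg_pos.2 hy) (neg_le_neg hxy)
  rw [← one_sub_stdNormalCDF, ← one_sub_stdNormalCDF, neg_sq, neg_sub_neg] at h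
  linarith

lemma stdNormalCDF_neg_le {x : ℝ} (hx : 0 < x) : stdNormalCDF (-x) ≤ 1 / x ^ 2 := by
  have hcheb := meas_ge_le_variance_div_sq (X := fun t => t)
    (memLp_id_gaussianReal (μ := 0) (v := 1) 2) hx
  rw [integral_id_gaussianReal, variance_fun_id_gaussianReal] at hcheb
  rw [stdNormalCDF_eq_measureReal]
  calc (gaussianReal 0 1).real (Iic (-x)) ≤ (gaussianReal 0 1).real {t | x ≤ |t - 0|} :=
        measureReal_mono fun t (ht : t ≤ -x) => show x ≤ |t - 0| by
          rw [sub_zero, abs_of_neg (by linarith)]; linarith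
    _ ≤ 1 / x ^ 2 := by
        rw [measureReal_def, ← NNReal.coe_one,
          ← ENNReal.toReal_ofReal (by positivity : (0 : ℝ) ≤ (1 : NNReal) / x ^ 2)]
        exact ENNReal.toReal_mono ENNReal.ofReal_ne_top hcheb

lemma one_sub_mul_le_rpow_neg {b w : ℝ} (hb : 0 ≤ b) (hw : -1 < w) :
    1 - b * w ≤ (1 + w) ^ (-b) := by
  have hpos : 0 < 1 + w := by linarith
  have hlog : Real.log (1 + w) ≤ w := by linarith [Real.log_le_sub_one_of_pos hpos]
  rw [Real.rpow_def_of_pos hpos]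
  nlinarith [Real.add_one_le_exp (Real.log (1 + w) * -b), mul_le_mul_of_nonneg_left hlog hb]

lemma rpow_neg_le_one_sub_mul_add_sq {b w : ℝ} (hb1 : 1 ≤ b) (hb2 : b ≤ 2) (hw : -1 / 2 ≤ w) :
    (1 + w) ^ (-b) ≤ 1 - b * w + 12 * w ^ 2 := by
  have hpos : 0 < 1 + w := by linarith
  -- `-b` is the convex combination `(2 - b) • (-1) + (b - 1) • (-2)`
  have hconvex := (convexOn_rpow_left hpos).2 (mem_univ (-1)) (mem_univ (-2))
    (by linarith : 0 ≤ 2 - b) (by linarith : 0 ≤ b - 1) (by ring)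
  have hexp : (2 - b) • (-1 : ℝ) + (b - 1) • (-2 : ℝ) = -b := by simp only [smul_eq_mul]; ring
  dsimp only at hconvex
  rw [hexp, smul_eq_mul, smul_eq_mul, Real.rpow_neg_one, Real.rpow_neg hpos.le 2, Real.rpow_two]
    at hconvex
  have hinv : (1 + w)⁻¹ ≤ 1 - w + 2 * w ^ 2 := by
    rw [inv_le_iff_one_le_mul₀ hpos]; nlinarith [sq_nonneg w]
  have hinv_sq : ((1 + w) ^ 2)⁻¹ ≤ 1 - 2 * w + 12 * w ^ 2 := by
    rw [inv_le_iff_one_le_mul₀ (by positivity)]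
    nlinarith [sq_nonneg w, mul_nonneg (sq_nonneg w) hpos.le]
  nlinarith [mul_le_mul_of_nonneg_left hinv (by linarith : 0 ≤ 2 - b),
    mul_le_mul_of_nonneg_left hinv_sq (by linarith : 0 ≤ b - 1), sq_nonneg w]

noncomputable def powTransform (b w : ℝ) : ℝ := (1 - (1 + w) ^ (-b)) / b

lemma powTransform_le {b w : ℝ} (hb : 0 < b) (hw : -1 < w) : powTransform b w ≤ w := by
  rw [powTransform, div_le_iff₀ hb]
  linarith [one_sub_mul_le_rpow_neg hb.le hw]

lemma sub_powTransform_le {b w : ℝ} (hb1 : 1 ≤ b) (hb2 : b ≤ 2) (hw : -1 / 2 ≤ w) :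
    w - powTransform b w ≤ 12 * w ^ 2 := by
  have hb : 0 < b := by linarith
  have h := rpow_neg_le_one_sub_mul_add_sq hb1 hb2 hw
  rw [powTransform, sub_le_iff_le_add, ← sub_le_iff_le_add', le_div_iff₀ hb]
  nlinarith [sq_nonneg w]

lemma div_le_powTransform {b w : ℝ} (hb : 1 ≤ b) (hw : 0 ≤ w) :
    w / (b * (1 + w)) ≤ powTransform b w := by
  have hpos : 0 < 1 + w := by linarith
  have h : (1 + w) ^ (-b) ≤ (1 + w) ^ (-1 : ℝ) :=
    Real.rpow_le_rpow_of_exponent_le (by linarith) (by linarith)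
  rw [Real.rpow_neg_one] at h
  rw [powTransform, div_le_div_iff₀ (by positivity) (by linarith)]
  have : (1 + w)⁻¹ * (1 + w) = 1 := inv_mul_cancel₀ hpos.ne'
  nlinarith [mul_le_mul_of_nonneg_right h (by positivity : 0 ≤ b * (1 + w))]

lemma stdNormalCDF_sub_stdNormalCDF_powTransform_le_of_neg {a b w : ℝ} (ha : 0 < a) (ha1 : a ≤ 1)
    (hb1 : 1 ≤ b) (hb2 : b ≤ 2) (hw : -1 < w) (hw0 : w < 0) :
    stdNormalCDF (w / a) - stdNormalCDF (powTransform b w / a) ≤ 12 * a := by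
  have hwa : w / a < 0 := div_neg_of_neg_of_pos hw0 ha
  have hw_sq : 0 < w ^ 2 := sq_pos_of_ne_zero hw0.ne
  rcases le_or_gt w (-1 / 2) with hw2 | hw2
  · have htail := stdNormalCDF_neg_le (neg_pos.2 hwa)
    rw [neg_neg, neg_sq, div_pow, one_div_div] at htail
    have : a ^ 2 / w ^ 2 ≤ 4 * a ^ 2 := by
      have : 1 / 4 ≤ w ^ 2 := by nlinarith
      rw [div_le_iff₀ hw_sq]; nlinarith [mul_le_mul_of_nonneg_left this (sq_nonneg a)]
    nlinarith [stdNormalCDF_nonneg (powTransform b w / a)]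
  · calc stdNormalCDF (w / a) - stdNormalCDF (powTransform b w / a)
        ≤ (w / a - powTransform b w / a) / (w / a) ^ 2 :=
          stdNormalCDF_sub_le_of_neg
            (div_le_div_of_nonneg_right (powTransform_le (by linarith) hw) ha.le) hwa
      _ = a * (w - powTransform b w) / w ^ 2 := by field_simp
      _ ≤ 12 * a := by
          rw [div_le_iff₀ hw_sq]
          nlinarith [sub_powTransform_le hb1 hb2 hw2.le]

lemma stdNormalCDF_sub_stdNormalCDF_powTransform_le_of_pos {a b w : ℝ} (ha : 0 < a) (ha1 : a ≤ 1)
    (hb1 : 1 ≤ b) (hb2 : b ≤ 3 / 2) (hw0 : 0 < w) :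
    stdNormalCDF (w / a) - stdNormalCDF (powTransform b w / a) ≤ 108 * a := by
  have hf := div_le_powTransform hb1 hw0.le
  rcases le_or_gt w 1 with hw1 | hw1
  · have hf3 : w / 3 ≤ powTransform b w := by
      refine le_trans ?_ hf
      have : b * (1 + w) ≤ 3 := by nlinarith
      rw [div_le_div_iff₀ (by norm_num) (by positivity)]
      nlinarith [mul_le_mul_of_nonneg_left this hw0.le]
    have hf_pos : 0 < powTransform b w := by linarith
    calc stdNormalCDF (w / a) - stdNormalCDF (powTransform b w / a)
        ≤ (w / a - powTransform b w / a) / (powTransform b w / a) ^ 2 :=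
          stdNormalCDF_sub_le_of_pos (by positivity)
            (div_le_div_of_nonneg_right (powTransform_le (by linarith) (by linarith)) ha.le)
      _ = a * (w - powTransform b w) / powTransform b w ^ 2 := by field_simp
      _ ≤ 108 * a := by
          rw [div_le_iff₀ (by positivity)]
          nlinarith [sub_powTransform_le hb1 (by linarith) (by linarith : -1 / 2 ≤ w),
            mul_le_mul hf3 hf3 (by positivity) hf_pos.le]
  · have hf3 : 1 / 3 ≤ powTransform b w := by
      refine le_trans ?_ hf
      rw [div_le_div_iff₀ (by norm_num) (by positivity)]; nlinarith
    have htail := stdNormalCDF_neg_le (x := powTransform b w / a) (by positivity)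
    rw [div_pow, one_div_div, ← one_sub_stdNormalCDF] at htail
    have : a ^ 2 / powTransform b w ^ 2 ≤ 9 * a ^ 2 := by
      rw [div_le_iff₀ (by positivity)]
      nlinarith [mul_le_mul hf3 hf3 (by positivity) (by positivity), sq_nonneg a]
    nlinarith [stdNormalCDF_le_one (w / a)]

lemma abs_one_sub_stdNormalCDF_sub_stdNormalCDF_le {a b z : ℝ} (ha : 0 < a) (ha1 : a ≤ 1)
    (hb1 : 1 ≤ b) (hb2 : b ≤ 3 / 2) (hz : 0 < 1 + z * a) :
    |(1 - stdNormalCDF (((1 + z * a) ^ (-b) - 1) / (a * b))) - stdNormalCDF z| ≤ 108 * a := by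
  set w := z * a with hw_def
  have hw : -1 < w := by linarith
  have hν : ((1 + w) ^ (-b) - 1) / (a * b) = -(powTransform b w / a) := by
    rw [powTransform]; field_simp; ring
  have hzw : z = w / a := by rw [hw_def]; field_simp
  have hle : powTransform b w / a ≤ w / a :=
    div_le_div_of_nonneg_right (powTransform_le (by linarith) hw) ha.le
  rw [hν, one_sub_stdNormalCDF, neg_neg, hzw, abs_sub_comm,
    abs_of_nonneg (sub_nonneg.2 (stdNormalCDF_mono hle))]
  rcases lt_trichotomy w 0 with hw0 | hw0 | hw0
  · linarith [stdNormalCDF_sub_stdNormalCDF_powTransform_le_of_neg ha ha1 hb1 (by linarith) hw hw0]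
  · have : powTransform b 0 = 0 := by simp [powTransform]
    rw [hw0, this, sub_self]; positivity
  · exact stdNormalCDF_sub_stdNormalCDF_powTransform_le_of_pos ha ha1 hb1 hb2 hw0

lemma asymptoticVariance_pos {β : ℝ} (hβ1 : 1 / 2 < β) (hβ2 : β < 3 / 4) :
    0 < (4 * β - 1) * (1 + Real.Gamma (3 - 4 * β) * Real.Gamma (4 * β - 1)
      / (Real.Gamma (2 * β) * Real.Gamma (2 - 2 * β))) := by
  have := div_pos
    (mul_pos (Real.Gamma_pos_of_pos (by linarith : 0 < 3 - 4 * β))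
      (Real.Gamma_pos_of_pos (by linarith : 0 < 4 * β - 1)))
    (mul_pos (Real.Gamma_pos_of_pos (by linarith : 0 < 2 * β))
      (Real.Gamma_pos_of_pos (by linarith : 0 < 2 - 2 * β)))
  exact mul_pos (by linarith) (by linarith)

/-- The estimate `|Φ̄(ν_T(z)) − Φ(z)| ≤ C/√T` used in the proof of the Berry–Esséen
bound for the moment estimator `k̂`. -/
theorem tail_nu_sub_Phi_bound
    (β : ℝ) (hβ : β ∈ Set.Ioo (1/2 : ℝ) (3/4 : ℝ)) (k : ℝ) (hk : 0 < k) :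
    ∃ C : ℝ, 0 < C ∧ ∃ T₀ : ℝ, 0 < T₀ ∧ ∀ T : ℝ, T₀ ≤ T → ∀ z : ℝ,
      (let σβ2 := (4*β - 1) * (1 + Real.Gamma (3 - 4*β) * Real.Gamma (4*β - 1)
        / (Real.Gamma (2*β) * Real.Gamma (2 - 2*β)));
       let σβ := Real.sqrt σβ2;
       0 < 1 + z * σβ / (2*β * Real.sqrt (k*T)) →
       (let ν := Real.sqrt (k*T/σβ2)
          * ((1 + z * σβ / (2*β * Real.sqrt (k*T))) ^ (-(2*β)) - 1);
        |(1 - stdNormalCDF ν) - stdNormalCDF z| ≤ C / Real.sqrt T)) := by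
  obtain ⟨hβ1, hβ2⟩ := hβ
  have hσ2 := asymptoticVariance_pos hβ1 hβ2
  set σ2 := (4*β - 1) * (1 + Real.Gamma (3 - 4*β) * Real.Gamma (4*β - 1)
    / (Real.Gamma (2*β) * Real.Gamma (2 - 2*β)))
  refine ⟨108 * (√σ2 / (2 * β * √k)), by positivity, σ2 / k, by positivity, fun T hT z => ?_⟩
  dsimp only
  intro hz
  have hσ2_le : σ2 ≤ k * T := by rwa [div_le_iff₀ hk, mul_comm] at hT
  have hT_pos : 0 < T := lt_of_lt_of_le (by positivity) hT
  set a := √σ2 / (2 * β * √(k * T)) with ha_def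
  have ha : 0 < a := by positivity
  have ha1 : a ≤ 1 := by
    rw [ha_def, div_le_one (by positivity)]
    nlinarith [Real.sqrt_le_sqrt hσ2_le, Real.sqrt_nonneg (k * T)]
  rw [mul_div_assoc z, ← ha_def] at hz ⊢
  have hν : √(k * T / σ2) = 1 / (a * (2 * β)) := by
    rw [ha_def, Real.sqrt_div' _ hσ2.le]; field_simp
  have hC : 108 * (√σ2 / (2 * β * √k)) / √T = 108 * a := by
    rw [ha_def, Real.sqrt_mul hk.le]; field_simp
  rw [hν, hC, one_div_mul_eq_div]
  exact abs_one_sub_stdNormalCDF_sub_stdNormalCDF_le ha ha1 (by linarith) (by linarith) hz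
end
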